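/- arXiv:1412.1125 — 14 statements merged into one kernel-verified Lean document; each statement's English description precedes it below -/
import Mathlib

section
/- Let L, R : ℝ² → ℝ³ be continuously differentiable maps; write L = (L̃, L_Z) and R = (R̃, R_Z), where L̃, R̃ : ℝ² → ℝ² are the planar (first two) components and L_Z, R_Z the third components. Assume L(1,v) = R(0,v) for every v ∈ [0,1], and that for every v ∈ [0,1] both ⟨∂_u L̃(1,v), ∂_v L̃(1,v)⟩ > 0 and ⟨∂_u R̃(0,v), ∂_v R̃(0,v)⟩ > 0. Then the following are equivalent: (i) the patches join G¹-smoothly along the common edge, i.e. there exist functions l, r, c : [0,1] → ℝ such that for every v ∈ [0,1] one has ∂_u L(1,v)·l(v) + ∂_u R(0,v)·r(v) + ∂_v L(1,v)·c(v) = 0 in ℝ³, l(v)·r(v) < 0, and the ℝ³ cross product of ∂_u L(1,v) and ∂_v L(1,v) is nonzero; (ii) for every v ∈ [0,1], ∂_u L_Z(1,v)·l*(v) + ∂_u R_Z(0,v)·r*(v) + ∂_v L_Z(1,v)·c*(v) = 0, where the conventional weight functions are c*(v) = ⟨∂_u L̃(1,v), ∂_u R̃(0,v)⟩, l*(v) =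 ⟨∂_u R̃(0,v), ∂_v L̃(1,v)⟩ and r*(v) = −⟨∂_u L̃(1,v), ∂_v L̃(1,v)⟩. -/
noncomputable section

/-- z-component of the cross product of two planar vectors. -/
def cross2 (a b : ℝ × ℝ) : ℝ := a.1 * b.2 - a.2 * b.1

/-- cross product in ℝ³ (represented as `ℝ × ℝ × ℝ`). -/
def cross3 (a b : ℝ × ℝ × ℝ) : ℝ × ℝ × ℝ :=
  (a.2.1 * b.2.2 - a.2.2 * b.2.1,
   a.2.2 * b.1 - a.1 * b.2.2,
   a.1 * b.2.1 - a.2.1 * b.1)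

/-- partial derivative with respect to the first variable. -/
def pdu {E : Type*} [NormedAddCommGroup E] [NormedSpace ℝ E]
    (F : ℝ × ℝ → E) (p : ℝ × ℝ) : E := fderiv ℝ F p (1, 0)

/-- partial derivative with respect to the second variable. -/
def pdv {E : Type*} [NormedAddCommGroup E] [NormedSpace ℝ E]
    (F : ℝ × ℝ → E) (p : ℝ × ℝ) : E := fderiv ℝ F p (0, 1)

/-- planar (first two) components of an ℝ³-valued map. -/
def planar (F : ℝ × ℝ → ℝ × ℝ × ℝ) : ℝ × ℝ → ℝ × ℝ := fun p => ((F p).1, (F p).2.1)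

/-- third (Z) component of an ℝ³-valued map. -/
def zcomp (F : ℝ × ℝ → ℝ × ℝ × ℝ) : ℝ × ℝ → ℝ := fun p => (F p).2.2

/-!
Write `A = ∂_u L(1,v)`, `B = ∂_u R(0,v)` and `C = ∂_v L(1,v)`, which equals `∂_v R(0,v)` because
the patches agree along the edge. The equation in (ii) is the Laplace expansion of `det[A B C]`
along the z-row. A G¹ relation with `l ≠ 0` makes `A, B, C` dependent, so the determinant
vanishes. Conversely, the conventional weights annihilate the planar components of any three
vectors, so once the determinant vanishes they give a G¹ relation; the regularity assumptions
make `l* > 0 > r*` and the z-component of `A × C` nonzero.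
-/

def planarProj : ℝ × ℝ × ℝ →L[ℝ] ℝ × ℝ :=
  (ContinuousLinearMap.fst ℝ ℝ (ℝ × ℝ)).prod
    ((ContinuousLinearMap.fst ℝ ℝ ℝ).comp (ContinuousLinearMap.snd ℝ ℝ (ℝ × ℝ)))

def zProj : ℝ × ℝ × ℝ →L[ℝ] ℝ :=
  (ContinuousLinearMap.snd ℝ ℝ ℝ).comp (ContinuousLinearMap.snd ℝ ℝ (ℝ × ℝ))

@[simp] lemma planarProj_apply (x : ℝ × ℝ × ℝ) : planarProj x = (x.1, x.2.1) := rfl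

/-- The determinant of the 3×3 matrix with columns `A`, `B`, `C`, expanded along its last row. -/
def det3 (A B C : ℝ × ℝ × ℝ) : ℝ :=
  A.2.2 * cross2 (planarProj B) (planarProj C) + B.2.2 * -cross2 (planarProj A) (planarProj C)
    + C.2.2 * cross2 (planarProj A) (planarProj B)

/-- In the plane any three vectors are dependent with these coefficients, so only the
z-component of the combination survives. -/
lemma cross2_smul_add_smul_add_smul (A B C : ℝ × ℝ × ℝ) :
    cross2 (planarProj B) (planarProj C) • A + (-cross2 (planarProj A) (planarProj C)) • B
      + cross2 (planarProj A) (planarProj B) • C = (0, 0, det3 A B C) := by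
  simp only [det3, cross2, planarProj_apply, Prod.ext_iff, Prod.fst_add, Prod.snd_add,
    Prod.smul_fst, Prod.smul_snd, smul_eq_mul]
  refine ⟨?_, ?_, ?_⟩ <;> ring

lemma det3_eq_zero_of_smul_add_smul_add_smul {A B C : ℝ × ℝ × ℝ} {l r c : ℝ}
    (h : l • A + r • B + c • C = 0) (hl : l ≠ 0) : det3 A B C = 0 := by
  simp only [Prod.ext_iff, Prod.fst_add, Prod.snd_add, Prod.smul_fst, Prod.smul_snd,
    smul_eq_mul, Prod.fst_zero, Prod.snd_zero] at h
  obtain ⟨h₁, h₂, h₃⟩ := h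
  refine (mul_eq_zero.mp ?_).resolve_left hl
  simp only [det3, cross2, planarProj_apply]
  linear_combination (B.1 * C.2.1 - B.2.1 * C.1) * h₃
    - B.2.2 * (C.2.1 * h₁ - C.1 * h₂) + C.2.2 * (B.2.1 * h₁ - B.1 * h₂)

lemma cross3_ne_zero_of_cross2_ne_zero {A C : ℝ × ℝ × ℝ}
    (h : cross2 (planarProj A) (planarProj C) ≠ 0) : cross3 A C ≠ 0 :=
  fun h₀ => h (congrArg (fun x : ℝ × ℝ × ℝ => x.2.2) h₀)

section PartialDerivatives

variable {F : ℝ × ℝ → ℝ × ℝ × ℝ} {p : ℝ × ℝ}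

lemma fderiv_planar (hF : DifferentiableAt ℝ F p) :
    fderiv ℝ (planar F) p = planarProj.comp (fderiv ℝ F p) :=
  (planarProj.hasFDerivAt.comp p hF.hasFDerivAt).fderiv

lemma fderiv_zcomp (hF : DifferentiableAt ℝ F p) :
    fderiv ℝ (zcomp F) p = zProj.comp (fderiv ℝ F p) :=
  (zProj.hasFDerivAt.comp p hF.hasFDerivAt).fderiv

lemma pdu_planar (hF : DifferentiableAt ℝ F p) : pdu (planar F) p = planarProj (pdu F p) := by
  rw [pdu, fderiv_planar hF]; rfl

lemma pdv_planar (hF : DifferentiableAt ℝ F p) : pdv (planar F) p = planarProj (pdv F p) := by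
  rw [pdv, fderiv_planar hF]; rfl

lemma pdu_zcomp (hF : DifferentiableAt ℝ F p) : pdu (zcomp F) p = (pdu F p).2.2 := by
  rw [pdu, fderiv_zcomp hF]; rfl

lemma pdv_zcomp (hF : DifferentiableAt ℝ F p) : pdv (zcomp F) p = (pdv F p).2.2 := by
  rw [pdv, fderiv_zcomp hF]; rfl

end PartialDerivatives

lemma hasDerivAt_pdv {E : Type*} [NormedAddCommGroup E] [NormedSpace ℝ E]
    {F : ℝ × ℝ → E} {x v : ℝ} (hF : DifferentiableAt ℝ F (x, v)) :
    HasDerivAt (fun t => F (x, t)) (pdv F (x, v)) v :=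
  hF.hasFDerivAt.comp_hasDerivAt v ((hasDerivAt_const v x).prodMk (hasDerivAt_id v))

lemma pdv_eq_of_eqOn_edge {E : Type*} [NormedAddCommGroup E] [NormedSpace ℝ E]
    {L R : ℝ × ℝ → E} {x y a b v : ℝ} (hab : a < b) (hv : v ∈ Set.Icc a b)
    (hL : DifferentiableAt ℝ L (x, v)) (hR : DifferentiableAt ℝ R (y, v))
    (hmatch : ∀ t ∈ Set.Icc a b, L (x, t) = R (y, t)) :
    pdv L (x, v) = pdv R (y, v) :=
  (uniqueDiffOn_Icc hab v hv).eq_deriv _ (hasDerivAt_pdv hL).hasDerivWithinAt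
    ((hasDerivAt_pdv hR).hasDerivWithinAt.congr_of_mem hmatch hv)

/-- G¹-smoothness of the concatenation of two patches is equivalent to the linear
equation on the Z-components with the conventional weight functions. -/
theorem stmt0
    (L R : ℝ × ℝ → ℝ × ℝ × ℝ)
    (hL : ContDiff ℝ 1 L) (hR : ContDiff ℝ 1 R)
    (hmatch : ∀ v ∈ Set.Icc (0:ℝ) 1, L (1, v) = R (0, v))
    (hregL : ∀ v ∈ Set.Icc (0:ℝ) 1,
      0 < cross2 (pdu (planar L) (1, v)) (pdv (planar L) (1, v)))
    (hregR : ∀ v ∈ Set.Icc (0:ℝ) 1,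
      0 < cross2 (pdu (planar R) (0, v)) (pdv (planar R) (0, v))) :
    (∃ l r c : ℝ → ℝ, ∀ v ∈ Set.Icc (0:ℝ) 1,
        l v • pdu L (1, v) + r v • pdu R (0, v) + c v • pdv L (1, v) = 0 ∧
        l v * r v < 0 ∧
        cross3 (pdu L (1, v)) (pdv L (1, v)) ≠ 0)
    ↔
    (∀ v ∈ Set.Icc (0:ℝ) 1,
        pdu (zcomp L) (1, v) * cross2 (pdu (planar R) (0, v)) (pdv (planar L) (1, v))
      + pdu (zcomp R) (0, v) * (-(cross2 (pdu (planar L) (1, v)) (pdv (planar L) (1, v))))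
      + pdv (zcomp L) (1, v) * cross2 (pdu (planar L) (1, v)) (pdu (planar R) (0, v)) = 0) := by
  have dL := hL.differentiable one_ne_zero
  have dR := hR.differentiable one_ne_zero
  simp only [pdu_planar (dL _), pdv_planar (dL _), pdu_planar (dR _), pdu_zcomp (dL _),
    pdv_zcomp (dL _), pdu_zcomp (dR _)] at hregL ⊢
  have hregR' : ∀ v ∈ Set.Icc (0:ℝ) 1,
      0 < cross2 (planarProj (pdu R (0, v))) (planarProj (pdv L (1, v))) := fun v hv => by
    rw [pdv_eq_of_eqOn_edge zero_lt_one hv (dL _) (dR _) hmatch, ← pdu_planar (dR _),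
      ← pdv_planar (dR _)]
    exact hregR v hv
  constructor
  · rintro ⟨l, r, c, H⟩ v hv
    obtain ⟨h, hlr, -⟩ := H v hv
    exact det3_eq_zero_of_smul_add_smul_add_smul h (left_ne_zero_of_mul hlr.ne)
  · intro H
    refine ⟨fun v => cross2 (planarProj (pdu R (0, v))) (planarProj (pdv L (1, v))),
      fun v => -cross2 (planarProj (pdu L (1, v))) (planarProj (pdv L (1, v))),
      fun v => cross2 (planarProj (pdu L (1, v))) (planarProj (pdu R (0, v))),
      fun v hv => ⟨?_, ?_, ?_⟩⟩
    · rw [cross2_smul_add_smul_add_smul, det3, H v hv]; rfl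
    · exact mul_neg_of_pos_of_neg (hregR' v hv) (neg_neg_of_pos (hregL v hv))
    · exact cross3_ne_zero_of_cross2_ne_zero (hregL v hv).ne'
end
end

section
/- Let n ≥ 1 and m ≥ 1 be integers, and let ΔL_j, ΔR_j (j = 0,…,n), ΔC_j (j = 0,…,n−1), l_k, r_k (k = 0,…,2m−1) and c_k (k = 0,…,2m) be real numbers. Define on ℝ the functions L_u(v) = n·∑_{j=0}^{n} ΔL_j B^n_j(v), R_u(v) = n·∑_{j=0}^{n} ΔR_j B^n_j(v), L_v(v) = n·∑_{j=0}^{n−1} ΔC_j B^{n−1}_j(v), l(v) = ∑_{k=0}^{2m−1} l_k B^{2m−1}_k(v), r(v) = ∑_{k=0}^{2m−1} r_k B^{2m−1}_k(v), c(v) = ∑_{k=0}^{2m} c_k B^{2m}_k(v). Then L_u(v)l(v) + R_u(v)r(v) + L_v(v)c(v) = 0 for every v ∈ [0,1] if and only if for every s = 0,…,n+2m−1 the linear equation "Eq(s)" holds: ∑_{j+k=s, 0≤j≤n, 0≤k≤2m−1} C(n,j)C(2m−1,k)(l_k ΔL_j + r_k ΔR_j) + ∑_{j+k=s, 0≤j≤n−1,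 0≤k≤2m} C(n−1,j)C(2m,k) c_k ΔC_j = 0. -/
/-!
Multiplying Bernstein expansions of degrees `p` and `q` gives an expansion in the functions
`v ^ s * (1 - v) ^ (p + q - s)`, whose coefficients are the convolution sums of `Eq(s)`; the
three products of the theorem all have degree `n + 2m - 1`. For fixed `N` the functions
`v ^ s * (1 - v) ^ (N - s)` are linearly independent on `[0, 1]`: the substitution
`v = x / (1 + x)` turns a vanishing combination of them, multiplied by `(1 + x) ^ N`, into a
polynomial in `x` vanishing on `[0, ∞)`.
-/

open Finset

/-- degree-`n` Bernstein polynomial `B^n_i`. -/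
noncomputable def bern (n i : ℕ) (v : ℝ) : ℝ :=
  (n.choose i : ℝ) * v ^ i * (1 - v) ^ (n - i)

open Polynomial

lemma bern_mul_bern {p q j k : ℕ} (hj : j ≤ p) (hk : k ≤ q) (v : ℝ) :
    bern p j v * bern q k v
      = (p.choose j * q.choose k : ℝ) * (v ^ (j + k) * (1 - v) ^ (p + q - (j + k))) := by
  rw [bern, bern, show p + q - (j + k) = (p - j) + (q - k) by omega, pow_add, pow_add]
  ring

noncomputable def bernConv (p q : ℕ) (f g : ℕ → ℝ) (s : ℕ) : ℝ :=
  ∑ j ∈ range (p + 1), ∑ k ∈ range (q + 1),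
    if j + k = s then (p.choose j * q.choose k : ℝ) * (f j * g k) else 0

lemma sum_bern_mul_sum_bern (p q : ℕ) (f g : ℕ → ℝ) (v : ℝ) :
    (∑ j ∈ range (p + 1), f j * bern p j v) * (∑ k ∈ range (q + 1), g k * bern q k v)
      = ∑ s ∈ range (p + q + 1), bernConv p q f g s * (v ^ s * (1 - v) ^ (p + q - s)) := by
  rw [Finset.sum_mul_sum]
  symm
  simp only [bernConv, Finset.sum_mul, ite_mul, zero_mul]
  rw [sum_comm]
  refine sum_congr rfl fun j hj => ?_
  rw [sum_comm]
  refine sum_congr rfl fun k hk => ?_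
  rw [mem_range_succ_iff] at hj hk
  rw [sum_ite_eq, if_pos (mem_range.mpr (by omega)), mul_mul_mul_comm (f j),
    bern_mul_bern hj hk]
  ring

lemma one_add_pow_mul_sum_div_one_add (N : ℕ) (a : ℕ → ℝ) {x : ℝ} (hx : 1 + x ≠ 0) :
    (1 + x) ^ N * ∑ s ∈ range (N + 1),
        a s * ((x / (1 + x)) ^ s * (1 - x / (1 + x)) ^ (N - s))
      = ∑ s ∈ range (N + 1), a s * x ^ s := by
  rw [mul_sum]
  refine sum_congr rfl fun s hs => ?_
  rw [show 1 - x / (1 + x) = 1 / (1 + x) by field_simp; ring,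
    ← Nat.add_sub_cancel' (mem_range_succ_iff.mp hs), pow_add, Nat.add_sub_cancel_left, div_pow, div_pow, one_pow]
  field_simp

lemma sum_mul_pow_mul_one_sub_pow_eq_zero_iff (N : ℕ) (a : ℕ → ℝ) :
    (∀ v ∈ Set.Icc (0 : ℝ) 1, ∑ s ∈ range (N + 1), a s * (v ^ s * (1 - v) ^ (N - s)) = 0)
      ↔ ∀ s ≤ N, a s = 0 := by
  refine ⟨fun h s hs => ?_, fun h v _ => sum_eq_zero fun s hs => ?_⟩
  · set P : ℝ[X] := ∑ t ∈ range (N + 1), C (a t) * X ^ t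
    have hroots : Set.Ici (0 : ℝ) ⊆ {x | P.IsRoot x} := by
      intro x (hx : 0 ≤ x)
      have hx1 : 0 < 1 + x := by linarith
      have hv : x / (1 + x) ∈ Set.Icc (0 : ℝ) 1 :=
        ⟨by positivity, (div_le_one hx1).mpr (by linarith)⟩
      simp only [Set.mem_ofPred_eq, IsRoot, P, eval_finsetSum, eval_mul, eval_C, eval_pow,
        eval_X, ← one_add_pow_mul_sum_div_one_add N a hx1.ne', h _ hv, mul_zero]
    have hP : P = 0 := eq_zero_of_infinite_isRoot P ((Set.Ici_infinite 0).mono hroots)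
    have hcoeff : P.coeff s = a s := by
      simp only [P, finsetSum_coeff, coeff_C_mul_X_pow]
      rw [sum_ite_eq, if_pos (mem_range.mpr (by omega))]
    rw [← hcoeff, hP, coeff_zero]
  · rw [h s (mem_range_succ_iff.mp hs), zero_mul]

/-- The linearized G¹-continuity equation `L_u l + R_u r + L_v c = 0` on `[0,1]` is
equivalent to the system of `n + 2m` indexed linear equations "Eq(s)". -/
theorem stmt1 (n m : ℕ) (hn : 1 ≤ n) (hm : 1 ≤ m)
    (ΔL ΔR ΔC l r c : ℕ → ℝ) :
    (∀ v ∈ Set.Icc (0:ℝ) 1,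
        ((n : ℝ) * ∑ j ∈ range (n + 1), ΔL j * bern n j v) *
          (∑ k ∈ range (2 * m), l k * bern (2 * m - 1) k v)
      + ((n : ℝ) * ∑ j ∈ range (n + 1), ΔR j * bern n j v) *
          (∑ k ∈ range (2 * m), r k * bern (2 * m - 1) k v)
      + ((n : ℝ) * ∑ j ∈ range n, ΔC j * bern (n - 1) j v) *
          (∑ k ∈ range (2 * m + 1), c k * bern (2 * m) k v) = 0)
    ↔
    (∀ s, s ≤ n + 2 * m - 1 →
        (∑ j ∈ range (n + 1), ∑ k ∈ range (2 * m),
          if j + k = s then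
            (n.choose j : ℝ) * ((2 * m - 1).choose k : ℝ) * (l k * ΔL j + r k * ΔR j)
          else 0)
      + (∑ j ∈ range n, ∑ k ∈ range (2 * m + 1),
          if j + k = s then
            ((n - 1).choose j : ℝ) * ((2 * m).choose k : ℝ) * (c k * ΔC j)
          else 0) = 0) := by
  obtain ⟨p, rfl⟩ : ∃ p, n = p + 1 := ⟨n - 1, by omega⟩
  obtain ⟨q, hq⟩ : ∃ q, 2 * m = q + 1 := ⟨2 * m - 1, by omega⟩
  rw [hq, show p + 1 + (q + 1) - 1 = p + q + 1 by omega]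
  -- expand the three products in the basis of degree `p + q + 1` and cancel the factor `p + 1`
  simp only [Nat.add_sub_cancel, mul_assoc, sum_bern_mul_sum_bern, Nat.add_right_comm p 1 q,
    ← add_assoc, ← mul_add, ← add_mul, ← Finset.sum_add_distrib, mul_eq_zero, Nat.cast_eq_zero,
    Nat.add_one_ne_zero, false_or]
  convert sum_mul_pow_mul_one_sub_pow_eq_zero_iff (p + q + 1) _ using 4 with s
  simp only [bernConv, ← Finset.sum_add_distrib]
  congr 1 <;> refine Finset.sum_congr rfl fun j _ => Finset.sum_congr rfl fun k _ => ?_ <;>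
    split_ifs <;> ring
end

section
/- Let Ã, B̃, C̃, D̃ ∈ ℝ² be the vertices of a strictly convex quadrilateral listed counterclockwise, and let P̃(u,v) = Ã(1−u)(1−v) + B̃u(1−v) + C̃uv + D̃(1−u)v be its bilinear parametrisation. Then: (i) the determinant of the Jacobian of P̃ equals det J(u,v) = ⟨B̃−Ã, C̃−D̃⟩u + ⟨C̃−B̃, D̃−Ã⟩v + ⟨B̃−Ã, D̃−Ã⟩; (ii) det J(u,v) > 0 for every (u,v) ∈ [0,1]²; (iii) P̃ is injective on [0,1]². Hence the bilinear in-plane parametrisation of a strictly convex planar quadrilateral element is regular. -/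
noncomputable section

/-- bilinear parametrisation of the quadrilateral with vertices `A B C D`. -/
def bilin (A B C D : ℝ × ℝ) (p : ℝ × ℝ) : ℝ × ℝ :=
  ((1 - p.1) * (1 - p.2)) • A + (p.1 * (1 - p.2)) • B + (p.1 * p.2) • C + ((1 - p.1) * p.2) • D

/-!
The partial derivatives of `bilin` are affine and the `uv`-term of their cross product cancels,
so the Jacobian is affine. Equivalently, it is the bilinear interpolation of its values at the
corners of the unit square, and these are exactly the four cross products expressing strict
convexity at the vertices; hence it is positive on the square. Since `bilin` is quadratic,
`bilin p - bilin q` is the Jacobian matrix at the midpoint of `p` and `q` applied to `p - q`,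
so a nonvanishing Jacobian on a convex set forces injectivity there.
-/

lemma hasFDerivAt_bilin (A B C D p : ℝ × ℝ) :
    HasFDerivAt (bilin A B C D)
      ((ContinuousLinearMap.fst ℝ ℝ ℝ).smulRight ((1 - p.2) • (B - A) + p.2 • (C - D)) +
        (ContinuousLinearMap.snd ℝ ℝ ℝ).smulRight ((1 - p.1) • (D - A) + p.1 • (C - B))) p := by
  have hu : HasFDerivAt (fun p : ℝ × ℝ => 1 - p.1) (0 - ContinuousLinearMap.fst ℝ ℝ ℝ) p :=
    (hasFDerivAt_const 1 p).sub hasFDerivAt_fst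
  have hv : HasFDerivAt (fun p : ℝ × ℝ => 1 - p.2) (0 - ContinuousLinearMap.snd ℝ ℝ ℝ) p :=
    (hasFDerivAt_const 1 p).sub hasFDerivAt_snd
  have hd : HasFDerivAt (bilin A B C D) _ p :=
    (((hu.mul hv).smul_const A).add ((hasFDerivAt_fst.mul hv).smul_const B)).add
      ((hasFDerivAt_fst.mul hasFDerivAt_snd).smul_const C) |>.add
      ((hu.mul hasFDerivAt_snd).smul_const D)
  refine hd.congr_fderiv ?_
  ext <;> simp <;> ring

lemma pdu_bilin (A B C D p : ℝ × ℝ) :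
    pdu (bilin A B C D) p = (1 - p.2) • (B - A) + p.2 • (C - D) := by
  simp [pdu, (hasFDerivAt_bilin A B C D p).fderiv]

lemma pdv_bilin (A B C D p : ℝ × ℝ) :
    pdv (bilin A B C D) p = (1 - p.1) • (D - A) + p.1 • (C - B) := by
  simp [pdv, (hasFDerivAt_bilin A B C D p).fderiv]

lemma cross2_pdu_pdv_bilin (A B C D : ℝ × ℝ) (u v : ℝ) :
    cross2 (pdu (bilin A B C D) (u, v)) (pdv (bilin A B C D) (u, v))
      = cross2 (B - A) (C - D) * u + cross2 (C - B) (D - A) * v + cross2 (B - A) (D - A) := by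
  simp only [pdu_bilin, pdv_bilin, cross2, Prod.fst_add, Prod.snd_add, Prod.smul_fst,
    Prod.smul_snd, Prod.fst_sub, Prod.snd_sub, smul_eq_mul]
  ring

lemma cross2_pdu_pdv_bilin_eq_interpolation (A B C D p : ℝ × ℝ) :
    cross2 (pdu (bilin A B C D) p) (pdv (bilin A B C D) p)
      = (1 - p.1) * (1 - p.2) * cross2 (A - D) (B - A) + p.1 * (1 - p.2) * cross2 (B - A) (C - B)
        + p.1 * p.2 * cross2 (C - B) (D - C) + (1 - p.1) * p.2 * cross2 (D - C) (A - D) := by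
  simp only [pdu_bilin, pdv_bilin, cross2, Prod.fst_add, Prod.snd_add, Prod.smul_fst,
    Prod.smul_snd, Prod.fst_sub, Prod.snd_sub, smul_eq_mul]
  ring

lemma bilinear_interpolation_pos {a b c d u v : ℝ} (ha : 0 < a) (hb : 0 < b) (hc : 0 < c)
    (hd : 0 < d) (hu : u ∈ Set.Icc (0 : ℝ) 1) (hv : v ∈ Set.Icc (0 : ℝ) 1) :
    0 < (1 - u) * (1 - v) * a + u * (1 - v) * b + u * v * c + (1 - u) * v * d := by
  have lerp_pos {x y t : ℝ} (hx : 0 < x) (hy : 0 < y) (ht : t ∈ Set.Icc (0 : ℝ) 1) :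
      0 < (1 - t) * x + t * y :=
    convex_Ioi (0 : ℝ) hx hy (sub_nonneg.2 ht.2) ht.1 (sub_add_cancel 1 t)
  have h := lerp_pos (lerp_pos ha hb hu) (lerp_pos hd hc hu) hv
  linear_combination h

lemma eq_zero_of_smul_add_smul_eq_zero {a b : ℝ × ℝ} (hab : cross2 a b ≠ 0) {x y : ℝ}
    (h : x • a + y • b = 0) : x = 0 ∧ y = 0 := by
  obtain ⟨h1, h2⟩ := Prod.ext_iff.1 h
  simp only [Prod.fst_add, Prod.snd_add, Prod.smul_fst, Prod.smul_snd, smul_eq_mul,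
    Prod.fst_zero, Prod.snd_zero] at h1 h2
  have hx : x * cross2 a b = 0 := by unfold cross2; linear_combination b.2 * h1 - b.1 * h2
  have hy : y * cross2 a b = 0 := by unfold cross2; linear_combination a.1 * h2 - a.2 * h1
  exact ⟨(mul_eq_zero.1 hx).resolve_right hab, (mul_eq_zero.1 hy).resolve_right hab⟩

lemma bilin_sub_bilin (A B C D p q : ℝ × ℝ) :
    bilin A B C D p - bilin A B C D q
      = (p.1 - q.1) • pdu (bilin A B C D) (midpoint ℝ p q)
        + (p.2 - q.2) • pdv (bilin A B C D) (midpoint ℝ p q) := by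
  simp only [pdu_bilin, pdv_bilin, midpoint_eq_smul_add, bilin]
  ext <;> simp <;> ring

lemma injOn_bilin {A B C D : ℝ × ℝ} {s : Set (ℝ × ℝ)} (hs : Convex ℝ s)
    (hJ : ∀ p ∈ s, cross2 (pdu (bilin A B C D) p) (pdv (bilin A B C D) p) ≠ 0) :
    Set.InjOn (bilin A B C D) s := by
  intro p hp q hq hpq
  have hm := hJ _ (hs.midpoint_mem hp hq)
  obtain ⟨h1, h2⟩ := eq_zero_of_smul_add_smul_eq_zero hm (by rw [← bilin_sub_bilin, hpq, sub_self])
  exact Prod.ext (sub_eq_zero.1 h1) (sub_eq_zero.1 h2)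

/-- For a strictly convex planar quadrilateral, the bilinear in-plane parametrisation
is regular: explicit Jacobian determinant, its positivity on the unit square, and
injectivity on the unit square. -/
theorem stmt2 (A B C D : ℝ × ℝ)
    (h1 : 0 < cross2 (B - A) (C - B)) (h2 : 0 < cross2 (C - B) (D - C))
    (h3 : 0 < cross2 (D - C) (A - D)) (h4 : 0 < cross2 (A - D) (B - A)) :
    (∀ u v : ℝ,
        cross2 (pdu (bilin A B C D) (u, v)) (pdv (bilin A B C D) (u, v))
          = cross2 (B - A) (C - D) * u + cross2 (C - B) (D - A) * v + cross2 (B - A) (D - A)) ∧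
    (∀ p ∈ Set.Icc ((0:ℝ), (0:ℝ)) (1, 1),
        0 < cross2 (pdu (bilin A B C D) p) (pdv (bilin A B C D) p)) ∧
    Set.InjOn (bilin A B C D) (Set.Icc ((0:ℝ), (0:ℝ)) (1, 1)) := by
  have hJ : ∀ p ∈ Set.Icc ((0:ℝ), (0:ℝ)) (1, 1),
      0 < cross2 (pdu (bilin A B C D) p) (pdv (bilin A B C D) p) := by
    rintro p ⟨⟨hu0, hv0⟩, hu1, hv1⟩
    rw [cross2_pdu_pdv_bilin_eq_interpolation]
    exact bilinear_interpolation_pos h4 h1 h2 h3 ⟨hu0, hu1⟩ ⟨hv0, hv1⟩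
  exact ⟨cross2_pdu_pdv_bilin A B C D, hJ,
    injOn_bilin (convex_Icc _ _) fun p hp => (hJ p hp).ne'⟩
end
end

section
/- Let k ≥ 3, let ẽ_j ∈ ℝ² (indices j taken cyclically modulo k) satisfy ⟨ẽ_j, ẽ_{j+1}⟩ ≠ 0 for every j, and let z_j ∈ ℝ; set ē_j = (ẽ_j, z_j) ∈ ℝ³. Then the following are equivalent: (i) for every j, the determinant of the 3×3 matrix with rows ē_{j−1}, ē_j, ē_{j+1} vanishes, i.e. ⟨ẽ_j, ẽ_{j+1}⟩·z_{j−1} − ⟨ẽ_{j−1}, ẽ_{j+1}⟩·z_j + ⟨ẽ_{j−1}, ẽ_j⟩·z_{j+1} = 0; (ii) all the tangent vectors ē_j are coplanar, namely there exists w ∈ ℝ² such that z_j equals the dot product of w and ẽ_j for every j. -/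
/-- The determinant of the rows `(e j, z j), (e (j+1), z (j+1)), (e (j+2), z (j+2))`,
expanded along the last column, vanishes for every `j`. -/
def DetsVanish (e : ℕ → ℝ × ℝ) (z : ℕ → ℝ) : Prop :=
  ∀ j, cross2 (e (j + 1)) (e (j + 2)) * z j
    - cross2 (e j) (e (j + 2)) * z (j + 1)
    + cross2 (e j) (e (j + 1)) * z (j + 2) = 0

/-- The determinant with a repeated column vanishes. -/
theorem cross2_mul_add_cross2_mul_add_cross2_mul (w a b c : ℝ × ℝ) :
    cross2 b c * (w.1 * a.1 + w.2 * a.2)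
      - cross2 a c * (w.1 * b.1 + w.2 * b.2)
      + cross2 a b * (w.1 * c.1 + w.2 * c.2) = 0 := by
  unfold cross2
  ring

theorem detsVanish_linear (e : ℕ → ℝ × ℝ) (w : ℝ × ℝ) :
    DetsVanish e (fun j ↦ w.1 * (e j).1 + w.2 * (e j).2) :=
  fun j ↦ cross2_mul_add_cross2_mul_add_cross2_mul w (e j) (e (j + 1)) (e (j + 2))

/-- Cramer's rule for the linear form `v ↦ w.1 * v.1 + w.2 * v.2`. -/
theorem exists_linear_eq_of_cross2_ne_zero {a b : ℝ × ℝ} (hab : cross2 a b ≠ 0) (s t : ℝ) :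
    ∃ w : ℝ × ℝ, w.1 * a.1 + w.2 * a.2 = s ∧ w.1 * b.1 + w.2 * b.2 = t := by
  refine ⟨((s * b.2 - t * a.2) / cross2 a b, (t * a.1 - s * b.1) / cross2 a b), ?_, ?_⟩ <;>
  · field_simp
    unfold cross2
    ring

/-- The coefficient `cross2 (e j) (e (j + 1))` of `z (j + 2)` never vanishes, so each
vanishing determinant fixes `z (j + 2)` in terms of `z j` and `z (j + 1)`. -/
theorem DetsVanish.unique {e : ℕ → ℝ × ℝ} {z z' : ℕ → ℝ}
    (hcr : ∀ j, cross2 (e j) (e (j + 1)) ≠ 0) (hz : DetsVanish e z) (hz' : DetsVanish e z')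
    (h0 : z 0 = z' 0) (h1 : z 1 = z' 1) : z = z' := by
  have key : ∀ j, z j = z' j ∧ z (j + 1) = z' (j + 1) := by
    intro j
    induction j with
    | zero => exact ⟨h0, h1⟩
    | succ n ih =>
      refine ⟨ih.2, ?_⟩
      have hn := hz n
      rw [ih.1, ih.2] at hn
      have hn' := hz' n
      exact mul_left_cancel₀ (hcr n) (by linarith)
  exact funext fun j ↦ (key j).1

theorem stmt4_general
    (e : ℕ → ℝ × ℝ) (z : ℕ → ℝ)
    (hcr : ∀ j, cross2 (e j) (e (j + 1)) ≠ 0) :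
    (∀ j, cross2 (e (j + 1)) (e (j + 2)) * z j
        - cross2 (e j) (e (j + 2)) * z (j + 1)
        + cross2 (e j) (e (j + 1)) * z (j + 2) = 0)
    ↔ (∃ w : ℝ × ℝ, ∀ j, z j = w.1 * (e j).1 + w.2 * (e j).2) := by
  constructor
  · intro hz
    obtain ⟨w, h0, h1⟩ := exists_linear_eq_of_cross2_ne_zero (hcr 0) (z 0) (z 1)
    exact ⟨w, congrFun (DetsVanish.unique hcr hz (detsVanish_linear e w) h0.symm h1.symm)⟩
  · rintro ⟨w, hw⟩
    rw [funext hw]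
    exact detsVanish_linear e w

/-- For `k`-periodic families of planar edge vectors `e j` (indices cyclically mod `k`)
with nonvanishing consecutive cross products, and heights `z j`, the vanishing of all the
3×3 determinants with rows `(e (j-1), z (j-1)), (e j, z j), (e (j+1), z (j+1))` is
equivalent to coplanarity of all the tangent vectors `(e j, z j)`. -/
theorem stmt4 (k : ℕ) (hk : 3 ≤ k)
    (e : ℕ → ℝ × ℝ) (z : ℕ → ℝ)
    (hpe : ∀ j, e (j + k) = e j) (hpz : ∀ j, z (j + k) = z j)
    (hcr : ∀ j, cross2 (e j) (e (j + 1)) ≠ 0) :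
    (∀ j, cross2 (e (j + 1)) (e (j + 2)) * z j
        - cross2 (e j) (e (j + 2)) * z (j + 1)
        + cross2 (e j) (e (j + 1)) * z (j + 2) = 0)
    ↔ (∃ w : ℝ × ℝ, ∀ j, z j = w.1 * (e j).1 + w.2 * (e j).2) :=
  stmt4_general e z hcr
end

section
/- In the setting of two adjacent bilinearly parametrised quadrilateral elements with vertices λ̃, λ̃', γ̃, γ̃', ρ̃, ρ̃', let n ≥ 2 be an integer. Put ẽ^{(R)} = ρ̃−γ̃, ẽ^{(C)} = γ̃'−γ̃, ẽ^{(L)} = λ̃−γ̃, and the twist characteristics t̃^{(R)} = γ̃−ρ̃+ρ̃'−γ̃' and t̃^{(L)} = γ̃−γ̃'+λ̃'−λ̃; assume ⟨ẽ^{(R)}, ẽ^{(C)}⟩ ≠ 0 and ⟨ẽ^{(C)}, ẽ^{(L)}⟩ ≠ 0. Given reals ΔL₀, ΔL₁, ΔR₀, ΔR₁, ΔC₀, ΔC₁, define the ℝ³ vectors ε^{(R)} = (ẽ^{(R)}, n·ΔR₀), ε^{(C)} = (ẽ^{(C)}, n·ΔC₀), ε^{(L)} = (ẽ^{(L)}, −n·ΔL₀),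 τ^{(R)} = (t̃^{(R)}, n²(ΔR₁−ΔR₀)), τ^{(L)} = (t̃^{(L)}, −n²(ΔL₁−ΔL₀)), and set δ^{(C)} = n(n−1)(ΔC₁−ΔC₀). Suppose Eq(0) holds: l₀ΔL₀ + r₀ΔR₀ + c₀ΔC₀ = 0. Then Eq(1), namely n(l₀ΔL₁ + r₀ΔR₁) + (l₁ΔL₀ + r₁ΔR₀) + (n−1)c₀ΔC₁ + 2c₁ΔC₀ = 0, holds if and only if tw^{(R)} + tw^{(L)} = coeff^{(C)}·δ^{(C)}, where tw^{(R)} = mix(τ^{(R)}, ε^{(R)}, ε^{(C)})/⟨ẽ^{(R)}, ẽ^{(C)}⟩², tw^{(L)} = mix(τ^{(L)}, ε^{(C)}, ε^{(L)})/⟨ẽ^{(C)}, ẽ^{(L)}⟩² and coeff^{(C)} = ⟨ẽ^{(R)}, ẽ^{(L)}⟩/(⟨ẽ^{(R)}, ẽ^{(C)}⟩·⟨ẽ^{(C)}, ẽ^{(L)}⟩), and mix(ā,b̄,c̄) denotes the determinant of the 3×3 matrix with rows ā, b̄, c̄. -/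
/-- mixed product: determinant of the 3×3 matrix with rows `a`, `b`, `c`
(vectors in ℝ³ represented as `ℝ × ℝ × ℝ`). -/
def mix3 (a b c : ℝ × ℝ × ℝ) : ℝ :=
  a.1 * (b.2.1 * c.2.2 - b.2.2 * c.2.1)
    - a.2.1 * (b.1 * c.2.2 - b.2.2 * c.1)
    + a.2.2 * (b.1 * c.2.1 - b.2.1 * c.1)

/-!
Write `a = ⟨ẽ^(R), ẽ^(C)⟩`, `b = ⟨ẽ^(C), ẽ^(L)⟩`, `c = ⟨ẽ^(R), ẽ^(L)⟩`, and let `P = ρ̃' − γ̃'`,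
`Q = λ̃' − γ̃'` be the edges at `γ̃'`, so that `t̃^(R) = P − ẽ^(R)` and `t̃^(L) = Q − ẽ^(L)`.
After multiplying by `a²b²`, the geometric form becomes
`b²·mix(τ^(R), ε^(R), ε^(C)) + a²·mix(τ^(L), ε^(C), ε^(L)) − abc·δ^(C) = 0`, and the left-hand side
is identically `n·(μ·Eq(0) − ab·Eq(1))` with `μ = a⟨ẽ^(C), Q⟩ − b⟨ẽ^(C), P⟩ + (n − 1)ab`.
Given `Eq(0)` and `nab ≠ 0`, the two equations are therefore equivalent.
-/

theorem div_sq_add_div_sq_eq_div_mul_mul_iff {K : Type*} [Field K] {a b : K}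
    (ha : a ≠ 0) (hb : b ≠ 0) (x y c d : K) :
    x / a ^ 2 + y / b ^ 2 = c / (a * b) * d ↔ b ^ 2 * x + a ^ 2 * y - a * b * c * d = 0 := by
  rw [sub_eq_zero]
  field_simp

theorem twist_form_eq_combination_of_edge_equations (eR eC eL P Q : ℝ × ℝ)
    (N dL0 dL1 dR0 dR1 dC0 dC1 : ℝ) :
    cross2 eC eL ^ 2
        * mix3 ((P - eR).1, (P - eR).2, N ^ 2 * (dR1 - dR0)) (eR.1, eR.2, N * dR0)
            (eC.1, eC.2, N * dC0)
      + cross2 eR eC ^ 2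
        * mix3 ((Q - eL).1, (Q - eL).2, -(N ^ 2 * (dL1 - dL0))) (eC.1, eC.2, N * dC0)
            (eL.1, eL.2, -(N * dL0))
      - cross2 eR eC * cross2 eC eL * cross2 eR eL * (N * (N - 1) * (dC1 - dC0))
    = N * ((cross2 eR eC * cross2 eC Q - cross2 eC eL * cross2 eC P
            + (N - 1) * cross2 eR eC * cross2 eC eL)
          * (cross2 eR eC * dL0 + -cross2 eC eL * dR0 + cross2 eR eL * dC0)
        - cross2 eR eC * cross2 eC eL
          * (N * (cross2 eR eC * dL1 + -cross2 eC eL * dR1)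
            + (cross2 (-eC) P * dL0 + -cross2 Q (-eC) * dR0)
            + (N - 1) * cross2 eR eL * dC1 + 2 * (1 / 2 * (cross2 eR Q - cross2 eL P)) * dC0)) := by
  obtain ⟨a1, a2⟩ := eR
  obtain ⟨b1, b2⟩ := eL
  obtain ⟨c1, c2⟩ := eC
  obtain ⟨p1, p2⟩ := P
  obtain ⟨q1, q2⟩ := Q
  simp only [cross2, mix3, Prod.mk_sub_mk, Prod.neg_mk]
  ring

/-- Assuming "Eq(0)", the equation "Eq(1)" for an inner edge is equivalent to its
geometric form `tw^(R) + tw^(L) = coeff^(C) · δ^(C)`. -/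
theorem stmt5 (n : ℕ) (hn : 2 ≤ n)
    (lam lam' gam gam' rho rho' : ℝ × ℝ)
    (dL0 dL1 dR0 dR1 dC0 dC1 : ℝ)
    (eR eC eL tR tL : ℝ × ℝ)
    (heR : eR = rho - gam) (heC : eC = gam' - gam) (heL : eL = lam - gam)
    (htR : tR = gam - rho + rho' - gam') (htL : tL = gam - gam' + lam' - lam)
    (hRC : cross2 eR eC ≠ 0) (hCL : cross2 eC eL ≠ 0)
    (l0 l1 r0 r1 c0 c1 : ℝ)
    (hl0 : l0 = cross2 (rho - gam) (gam' - gam))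
    (hl1 : l1 = cross2 (gam - gam') (rho' - gam'))
    (hr0 : r0 = -cross2 (gam' - gam) (lam - gam))
    (hr1 : r1 = -cross2 (lam' - gam') (gam - gam'))
    (hc0 : c0 = cross2 (rho - gam) (lam - gam))
    (hc1 : c1 = (1/2) * (cross2 (rho - gam) (lam' - gam') - cross2 (lam - gam) (rho' - gam')))
    (εR εC εL τR τL : ℝ × ℝ × ℝ) (δC : ℝ)
    (hεR : εR = (eR.1, eR.2, (n : ℝ) * dR0))
    (hεC : εC = (eC.1, eC.2, (n : ℝ) * dC0))
    (hεL : εL = (eL.1, eL.2, -((n : ℝ) * dL0)))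
    (hτR : τR = (tR.1, tR.2, (n : ℝ) ^ 2 * (dR1 - dR0)))
    (hτL : τL = (tL.1, tL.2, -((n : ℝ) ^ 2 * (dL1 - dL0))))
    (hδC : δC = (n : ℝ) * ((n : ℝ) - 1) * (dC1 - dC0))
    (hEq0 : l0 * dL0 + r0 * dR0 + c0 * dC0 = 0) :
    ((n : ℝ) * (l0 * dL1 + r0 * dR1) + (l1 * dL0 + r1 * dR0)
        + ((n : ℝ) - 1) * c0 * dC1 + 2 * c1 * dC0 = 0)
    ↔ (mix3 τR εR εC / (cross2 eR eC) ^ 2 + mix3 τL εC εL / (cross2 eC eL) ^ 2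
        = (cross2 eR eL / (cross2 eR eC * cross2 eC eL)) * δC) := by
  have hN : (n : ℝ) ≠ 0 := Nat.cast_ne_zero.mpr (by omega)
  have hγ : gam - gam' = -eC := by rw [heC, neg_sub]
  have htR' : tR = (rho' - gam') - eR := by rw [htR, heR]; abel
  have htL' : tL = (lam' - gam') - eL := by rw [htL, heL]; abel
  simp only [← heR, ← heC, ← heL, hγ] at hl0 hl1 hr0 hr1 hc0 hc1
  subst hl0 hl1 hr0 hr1 hc0 hc1 hεR hεC hεL hτR hτL hδC htR' htL'
  rw [div_sq_add_div_sq_eq_div_mul_mul_iff hRC hCL,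
    twist_form_eq_combination_of_edge_equations, hEq0]
  simp [hN, hRC, hCL]
end

section
/- Let k ≥ 4 be an even integer. Let θ₀ < θ₁ < … < θ_{k−1} be real numbers with θ_{k−1} < θ₀ + 2π, θ_{j+1} − θ_j < π for j = 0,…,k−2, and (θ₀ + 2π) − θ_{k−1} < π, and let ẽ_j = s_j·(cos θ_j, sin θ_j) with s_j > 0 for each j (so the ẽ_j model the directed edges emanating counterclockwise from an inner vertex of a strictly convex quadrilateral mesh, consecutive edges spanning an angle strictly between 0 and π). If ⟨ẽ_{j−1}, ẽ_{j+1}⟩ = 0 for every j (indices modulo k), then k = 4; moreover ẽ₀ and ẽ₂ are colinear and ẽ₁ and ẽ₃ are colinear, i.e. the vertex is a regular 4-vertex. -/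
open Real

theorem cross2_smul_cos_sin (s t a b : ℝ) :
    cross2 (s • (cos a, sin a)) (t • (cos b, sin b)) = s * t * sin (b - a) := by
  simp only [cross2, Prod.smul_mk, smul_eq_mul, sin_sub]
  ring

theorem Real.eq_pi_of_sin_eq_zero {x : ℝ} (hx₀ : 0 < x) (hx₁ : x < 2 * π) (h : sin x = 0) :
    x = π := by
  have : sin (x - π) = 0 := by rw [sin_sub_pi, h, neg_zero]
  linarith [(sin_eq_zero_iff_of_lt_of_lt (x := x - π) (by linarith) (by linarith)).mp this]

theorem sub_eq_pi_of_cross2_eq_zero {s t a b : ℝ} (hs : 0 < s) (ht : 0 < t) (hab : a < b)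
    (hba : b < a + 2 * π) (h : cross2 (s • (cos a, sin a)) (t • (cos b, sin b)) = 0) :
    b - a = π := by
  rw [cross2_smul_cos_sin, mul_eq_zero] at h
  exact eq_pi_of_sin_eq_zero (by linarith) (by linarith)
    (h.resolve_left (mul_pos hs ht).ne')

theorem stmt7_general (k : ℕ) (hk4 : 4 ≤ k) (hke : Even k)
    (θ s : ℕ → ℝ)
    (hmono : ∀ j, j + 1 < k → θ j < θ (j + 1))
    (hwrap : θ (k - 1) < θ 0 + 2 * Real.pi)
    (hs : ∀ j, j < k → 0 < s j)
    (e : ℕ → ℝ × ℝ)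
    (he : ∀ j, j < k → e j = s j • (Real.cos (θ j), Real.sin (θ j)))
    (hcross : ∀ j, j < k → cross2 (e j) (e ((j + 2) % k)) = 0) :
    k = 4 ∧ cross2 (e 0) (e 2) = 0 ∧ cross2 (e 1) (e 3) = 0 := by
  have hθ : StrictMonoOn θ (Set.Iic (k - 1)) :=
    strictMonoOn_Iic_of_lt_succ fun m hm ↦ by simpa using hmono m (by omega)
  have hmem {j : ℕ} (hj : j < k) : j ∈ Set.Iic (k - 1) := Set.mem_Iic.2 (by omega)
  have hle {i j : ℕ} (hij : i ≤ j) (hj : j < k) : θ i ≤ θ j :=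
    hθ.monotoneOn (hmem (by omega)) (hmem hj) hij
  have hopp (j : ℕ) (hj : j + 2 < k) : θ (j + 2) - θ j = π := by
    refine sub_eq_pi_of_cross2_eq_zero (hs j (by omega)) (hs (j + 2) hj)
      (hθ (hmem (by omega)) (hmem hj) (by omega)) ?_ ?_
    · linarith [hle (Nat.zero_le j) (by omega), hle (show j + 2 ≤ k - 1 by omega) (by omega)]
    · simpa [Nat.mod_eq_of_lt hj, he j (by omega), he (j + 2) hj] using hcross j (by omega)
  have hk : k = 4 := by
    by_contra hk
    obtain ⟨m, rfl⟩ := hke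
    linarith [hopp 0 (by omega), hopp 2 (by omega), hle (show 4 ≤ m + m - 1 by omega) (by omega)]
  subst hk
  exact ⟨rfl, by simpa using hcross 0 (by norm_num), by simpa using hcross 1 (by norm_num)⟩

/-- At an inner even vertex of a strictly convex quadrilateral mesh (edges given by
directions `θ j` listed counterclockwise, with consecutive angular gaps strictly between
`0` and `π`), if every pair of edges `e (j−1)`, `e (j+1)` is colinear then the valence is
`4` and the vertex is a regular 4-vertex. -/
theorem stmt7 (k : ℕ) (hk4 : 4 ≤ k) (hke : Even k)
    (θ s : ℕ → ℝ)
    (hmono : ∀ j, j + 1 < k → θ j < θ (j + 1))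
    (hwrap : θ (k - 1) < θ 0 + 2 * Real.pi)
    (hgap : ∀ j, j + 1 < k → θ (j + 1) - θ j < Real.pi)
    (hgapw : (θ 0 + 2 * Real.pi) - θ (k - 1) < Real.pi)
    (hs : ∀ j, j < k → 0 < s j)
    (e : ℕ → ℝ × ℝ)
    (he : ∀ j, j < k → e j = s j • (Real.cos (θ j), Real.sin (θ j)))
    (hcross : ∀ j, j < k → cross2 (e j) (e ((j + 2) % k)) = 0) :
    k = 4 ∧ cross2 (e 0) (e 2) = 0 ∧ cross2 (e 1) (e 3) = 0 :=
  stmt7_general k hk4 hke θ s hmono hwrap hs e he hcross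
end

section
/- Let k ≥ 4 be an even integer and let ẽ_j ∈ ℝ² (indices j taken cyclically modulo k) satisfy ⟨ẽ_{j−1}, ẽ_j⟩ ≠ 0 for every j. Set coeff_j = ⟨ẽ_{j−1}, ẽ_{j+1}⟩/(⟨ẽ_{j−1}, ẽ_j⟩·⟨ẽ_j, ẽ_{j+1}⟩). Let Z_XX, Z_XY, Z_YY ∈ ℝ and, writing ẽ_j = (α_j, β_j), put δ_j = α_j²·Z_XX + 2α_jβ_j·Z_XY + β_j²·Z_YY. Then the "Circular Constraint" is automatically satisfied: ∑_{j=0}^{k−1} (−1)^j · coeff_j · δ_j = 0. In other words, if the second-order directional data δ_j are compatible with a second fundamental form at the vertex, the Circular Constraint holds. -/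
open Finset Function

theorem Function.Periodic.sum_range_add {M : Type*} [AddCommMonoid M] {f : ℕ → M} {k : ℕ}
    (hf : Periodic f k) (m : ℕ) : ∑ j ∈ range k, f (j + m) = ∑ j ∈ range k, f j := by
  induction m with
  | zero => rfl
  | succ m ih =>
    rw [← ih]
    cases k with
    | zero => rfl
    | succ k =>
      rw [sum_range_succ, sum_range_succ' (fun j => f (j + m))]
      congr 1
      · exact sum_congr rfl fun j _ => by rw [add_right_comm, add_assoc]
      · rw [zero_add, show k + (m + 1) = m + (k + 1) by omega, hf m]

theorem sum_range_neg_one_pow_mul_add_pred_eq_zero {R : Type*} [Ring R] {g : ℕ → R} {k : ℕ}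
    (hk : Even k) (hg : Periodic g k) :
    ∑ j ∈ range k, (-1) ^ j * (g (j + (k - 1)) + g j) = 0 := by
  rcases Nat.eq_zero_or_pos k with rfl | hk0
  · simp
  set F : ℕ → R := fun j => (-1) ^ j * g j
  have hF : Periodic F k := fun j => by simp only [F, pow_add, hk.neg_one_pow, mul_one, hg j]
  have hodd : Odd (k - 1) := Nat.Even.sub_odd hk0 hk odd_one
  have hterm : ∀ j, (-1) ^ j * (g (j + (k - 1)) + g j) = F j - F (j + (k - 1)) := fun j => by
    simp only [F, pow_add, hodd.neg_one_pow]
    noncomm_ring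
  rw [sum_congr rfl fun j _ => hterm j, sum_sub_distrib, hF.sum_range_add, sub_self]

def secondFundForm (ZXX ZXY ZYY : ℝ) (a b : ℝ × ℝ) : ℝ :=
  a.1 * b.1 * ZXX + (a.1 * b.2 + a.2 * b.1) * ZXY + a.2 * b.2 * ZYY

section SecondFundForm

variable (ZXX ZXY ZYY : ℝ)

theorem secondFundForm_self (a : ℝ × ℝ) :
    secondFundForm ZXX ZXY ZYY a a = a.1 ^ 2 * ZXX + 2 * a.1 * a.2 * ZXY + a.2 ^ 2 * ZYY := by
  unfold secondFundForm
  ring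

/-- Pair the identity `⟨a, b⟩ • c + ⟨b, c⟩ • a = ⟨a, c⟩ • b` in `ℝ²` with `b`. -/
theorem cross2_mul_secondFundForm_self (a b c : ℝ × ℝ) :
    cross2 a c * secondFundForm ZXX ZXY ZYY b b =
      cross2 a b * secondFundForm ZXX ZXY ZYY b c +
        cross2 b c * secondFundForm ZXX ZXY ZYY a b := by
  unfold cross2 secondFundForm
  ring

theorem cross2_div_mul_secondFundForm_self {a b c : ℝ × ℝ} (hab : cross2 a b ≠ 0)
    (hbc : cross2 b c ≠ 0) :
    cross2 a c / (cross2 a b * cross2 b c) * secondFundForm ZXX ZXY ZYY b b =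
      secondFundForm ZXX ZXY ZYY a b / cross2 a b +
        secondFundForm ZXX ZXY ZYY b c / cross2 b c := by
  rw [div_mul_eq_mul_div, cross2_mul_secondFundForm_self]
  field_simp
  ring

end SecondFundForm

theorem stmt8_general (k : ℕ) (hke : Even k)
    (e : ℕ → ℝ × ℝ) (hper : ∀ j, e (j + k) = e j)
    (hcross : ∀ j, cross2 (e j) (e (j + 1)) ≠ 0)
    (ZXX ZXY ZYY : ℝ) :
    ∑ j ∈ Finset.range k, (-1 : ℝ) ^ j *
      (cross2 (e (j + (k - 1))) (e (j + 1)) /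
        (cross2 (e (j + (k - 1))) (e j) * cross2 (e j) (e (j + 1)))) *
      ((e j).1 ^ 2 * ZXX + 2 * (e j).1 * (e j).2 * ZXY + (e j).2 ^ 2 * ZYY) = 0 := by
  rcases Nat.eq_zero_or_pos k with rfl | hk0
  · simp
  have hprev : ∀ j, e (j + (k - 1) + 1) = e j := fun j => by
    rw [show j + (k - 1) + 1 = j + k by omega, hper]
  set g : ℕ → ℝ := fun j =>
    secondFundForm ZXX ZXY ZYY (e j) (e (j + 1)) / cross2 (e j) (e (j + 1))
  have hg : Periodic g k := fun j => by simp only [g, add_right_comm j k 1, hper]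
  rw [← sum_range_neg_one_pow_mul_add_pred_eq_zero hke hg]
  refine sum_congr rfl fun j _ => ?_
  have hcross_prev := hcross (j + (k - 1))
  rw [hprev] at hcross_prev
  rw [mul_assoc, ← secondFundForm_self,
    cross2_div_mul_secondFundForm_self _ _ _ hcross_prev (hcross j)]
  simp only [g, hprev]

/-- If the second-order directional data `δ j` are compatible with a second fundamental
form `(ZXX, ZXY, ZYY)` at an inner even vertex, then the "Circular Constraint" is
automatically satisfied. Indices are cyclic modulo `k` (the edge family `e` is
`k`-periodic, and `e (j + (k-1))` stands for `e (j−1)`). -/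
theorem stmt8 (k : ℕ) (hk : 4 ≤ k) (hke : Even k)
    (e : ℕ → ℝ × ℝ) (hper : ∀ j, e (j + k) = e j)
    (hcross : ∀ j, cross2 (e j) (e (j + 1)) ≠ 0)
    (ZXX ZXY ZYY : ℝ) :
    ∑ j ∈ Finset.range k, (-1 : ℝ) ^ j *
      (cross2 (e (j + (k - 1))) (e (j + 1)) /
        (cross2 (e (j + (k - 1))) (e j) * cross2 (e j) (e (j + 1)))) *
      ((e j).1 ^ 2 * ZXX + 2 * (e j).1 * (e j).2 * ZXY + (e j).2 ^ 2 * ZYY) = 0 :=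
  stmt8_general k hke e hper hcross ZXX ZXY ZYY
end

section
/- Let ẽ₁, ẽ₂, ẽ₃, ẽ₄ ∈ ℝ² satisfy ⟨ẽ₁, ẽ₂⟩ ≠ 0, ⟨ẽ₂, ẽ₃⟩ ≠ 0, ⟨ẽ₃, ẽ₄⟩ ≠ 0, ⟨ẽ₄, ẽ₁⟩ ≠ 0, and additionally ⟨ẽ₃, ẽ₁⟩ ≠ 0 (so the configuration is a non-regular 4-vertex). With coeff_j = ⟨ẽ_{j−1}, ẽ_{j+1}⟩/(⟨ẽ_{j−1}, ẽ_j⟩·⟨ẽ_j, ẽ_{j+1}⟩) (indices taken cyclically modulo 4), suppose δ₁, δ₂, δ₃, δ₄ ∈ ℝ satisfy the Circular Constraint ∑_{j=1}^{4} (−1)^j · coeff_j · δ_j = 0. Then there exist Z_XX, Z_XY, Z_YY ∈ ℝ such that, writing ẽ_j = (α_j, β_j), δ_j = α_j²·Z_XX + 2α_jβ_j·Z_XY + β_j²·Z_YY holds for every j = 1,…,4; i.e. for a non-regular 4-vertex, compatibility of the δ_j with second-order partial derivatives of some functional surface is necessary as well as sufficient for the Circular Constraint. -/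
@[simp]
lemma cross2_self (a : ℝ × ℝ) : cross2 a a = 0 := by
  simp only [cross2]; ring

lemma cross2_swap (a b : ℝ × ℝ) : cross2 b a = -cross2 a b := by
  simp only [cross2]; ring

/-- The second directional derivative along `x` of a surface with Hessian `[[X, Y], [Y, Z]]`. -/
def quadForm (X Y Z : ℝ) (x : ℝ × ℝ) : ℝ := x.1 ^ 2 * X + 2 * x.1 * x.2 * Y + x.2 ^ 2 * Z

/-- The left-hand side `∑ⱼ (-1)ʲ coeffⱼ δⱼ` of the Circular Constraint. -/
noncomputable def circularSum (e1 e2 e3 e4 : ℝ × ℝ) (δ1 δ2 δ3 δ4 : ℝ) : ℝ :=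
  -(cross2 e4 e2 / (cross2 e4 e1 * cross2 e1 e2)) * δ1
    + (cross2 e1 e3 / (cross2 e1 e2 * cross2 e2 e3)) * δ2
    - (cross2 e2 e4 / (cross2 e2 e3 * cross2 e3 e4)) * δ3
    + (cross2 e3 e1 / (cross2 e3 e4 * cross2 e4 e1)) * δ4

lemma quadForm_eq_cross2_mul_cross2 (v w x : ℝ × ℝ) :
    quadForm (v.2 * w.2) (-(v.1 * w.2 + v.2 * w.1) / 2) (v.1 * w.1) x
      = cross2 x v * cross2 x w := by
  simp only [quadForm, cross2]; ring

theorem exists_quadForm_eq {u v w : ℝ × ℝ}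
    (huv : cross2 u v ≠ 0) (hvw : cross2 v w ≠ 0) (hwu : cross2 w u ≠ 0) (a b c : ℝ) :
    ∃ X Y Z : ℝ, quadForm X Y Z u = a ∧ quadForm X Y Z v = b ∧ quadForm X Y Z w = c := by
  -- Lagrange interpolation: `x ↦ ⟨x, v⟩⟨x, w⟩` is a quadratic form vanishing at `v` and `w`.
  set p := a / (cross2 u v * cross2 u w)
  set q := b / (cross2 v w * cross2 v u)
  set r := c / (cross2 w u * cross2 w v)
  obtain ⟨X, Y, Z, hXYZ⟩ : ∃ X Y Z : ℝ, ∀ x, quadForm X Y Z x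
      = p * (cross2 x v * cross2 x w) + q * (cross2 x w * cross2 x u)
        + r * (cross2 x u * cross2 x v) :=
    ⟨p * (v.2 * w.2) + q * (w.2 * u.2) + r * (u.2 * v.2),
      p * (-(v.1 * w.2 + v.2 * w.1) / 2) + q * (-(w.1 * u.2 + w.2 * u.1) / 2)
        + r * (-(u.1 * v.2 + u.2 * v.1) / 2),
      p * (v.1 * w.1) + q * (w.1 * u.1) + r * (u.1 * v.1),
      fun x => by simp only [← quadForm_eq_cross2_mul_cross2, quadForm]; ring⟩
  have hne {x y : ℝ × ℝ} (h : cross2 x y ≠ 0) : cross2 y x ≠ 0 := by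
    rwa [cross2_swap, neg_ne_zero]
  refine ⟨X, Y, Z, ?_, ?_, ?_⟩ <;>
    simp only [hXYZ, cross2_self, mul_zero, zero_mul, add_zero, zero_add]
  · exact div_mul_cancel₀ a (mul_ne_zero huv (hne hwu))
  · exact div_mul_cancel₀ b (mul_ne_zero hvw (hne huv))
  · exact div_mul_cancel₀ c (mul_ne_zero hwu (hne hvw))

lemma circularSum_quadForm {e1 e2 e3 e4 : ℝ × ℝ}
    (h12 : cross2 e1 e2 ≠ 0) (h23 : cross2 e2 e3 ≠ 0)
    (h34 : cross2 e3 e4 ≠ 0) (h41 : cross2 e4 e1 ≠ 0) (X Y Z : ℝ) :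
    circularSum e1 e2 e3 e4
      (quadForm X Y Z e1) (quadForm X Y Z e2) (quadForm X Y Z e3) (quadForm X Y Z e4) = 0 := by
  unfold circularSum
  field_simp
  simp only [cross2, quadForm]
  ring

lemma eq_of_circularSum_eq_zero {e1 e2 e3 e4 : ℝ × ℝ}
    (h34 : cross2 e3 e4 ≠ 0) (h41 : cross2 e4 e1 ≠ 0) (h31 : cross2 e3 e1 ≠ 0)
    {δ1 δ2 δ3 δ4 δ4' : ℝ} (h : circularSum e1 e2 e3 e4 δ1 δ2 δ3 δ4 = 0)
    (h' : circularSum e1 e2 e3 e4 δ1 δ2 δ3 δ4' = 0) : δ4 = δ4' := by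
  have hcoeff : cross2 e3 e1 / (cross2 e3 e4 * cross2 e4 e1) * (δ4 - δ4') = 0 := by
    unfold circularSum at h h'
    linear_combination h - h'
  simpa [sub_eq_zero, h31, h34, h41] using hcoeff

/-- For a non-regular 4-vertex, the "Circular Constraint" on the data `δ j` implies the
existence of second-order partial derivatives `ZXX, ZXY, ZYY` of a functional surface
compatible with all the `δ j`. -/
theorem stmt9 (e1 e2 e3 e4 : ℝ × ℝ)
    (h12 : cross2 e1 e2 ≠ 0) (h23 : cross2 e2 e3 ≠ 0)
    (h34 : cross2 e3 e4 ≠ 0) (h41 : cross2 e4 e1 ≠ 0)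
    (h31 : cross2 e3 e1 ≠ 0)
    (δ1 δ2 δ3 δ4 : ℝ)
    (hcc :
        -(cross2 e4 e2 / (cross2 e4 e1 * cross2 e1 e2)) * δ1
      + (cross2 e1 e3 / (cross2 e1 e2 * cross2 e2 e3)) * δ2
      - (cross2 e2 e4 / (cross2 e2 e3 * cross2 e3 e4)) * δ3
      + (cross2 e3 e1 / (cross2 e3 e4 * cross2 e4 e1)) * δ4 = 0) :
    ∃ ZXX ZXY ZYY : ℝ,
      δ1 = e1.1 ^ 2 * ZXX + 2 * e1.1 * e1.2 * ZXY + e1.2 ^ 2 * ZYY ∧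
      δ2 = e2.1 ^ 2 * ZXX + 2 * e2.1 * e2.2 * ZXY + e2.2 ^ 2 * ZYY ∧
      δ3 = e3.1 ^ 2 * ZXX + 2 * e3.1 * e3.2 * ZXY + e3.2 ^ 2 * ZYY ∧
      δ4 = e4.1 ^ 2 * ZXX + 2 * e4.1 * e4.2 * ZXY + e4.2 ^ 2 * ZYY := by
  obtain ⟨X, Y, Z, h1, h2, h3⟩ := exists_quadForm_eq h12 h23 h31 δ1 δ2 δ3
  refine ⟨X, Y, Z, h1.symm, h2.symm, h3.symm, ?_⟩
  have hq := circularSum_quadForm h12 h23 h34 h41 X Y Z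
  rw [h1, h2, h3] at hq
  exact eq_of_circularSum_eq_zero h34 h41 h31 hcc hq
end

section
/- Let n ≥ 4 be an integer and let l₀, l₁, r₀, r₁ be nonzero reals. Let Â be the real matrix with rows indexed by s ∈ {2,…,n−1} and columns indexed by pairs (t,σ) with t ∈ {2,…,n−2} and σ ∈ {L,R}, whose entries are: Â[s,(t,L)] = (n+1−t)·l₀ if s = t, Â[s,(t,L)] = (t+1)·l₁ if s = t+1, and 0 otherwise; Â[s,(t,R)] = (n+1−t)·r₀ if s = t, Â[s,(t,R)] = (t+1)·r₁ if s = t+1, and 0 otherwise. Then: (a) there exist coefficients α₂,…,α_{n−1}, not all zero, with ∑_{s=2}^{n−1} α_s·Â_s = 0 (where Â_s denotes the s-th row) if and only if l₀r₁ − r₀l₁ = 0 (the "Projections Relation"); (b) when l₀r₁ = r₀l₁, every such family of coefficients satisfies α_s = (2/(n(n+1)))·C(n+1,s)·(−1)^s·κ^{s−2}·α₂ for s = 2,…,n−1, where κ = l₀/l₁ = r₀/r₁. -/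
/-!
Column `t` of `Â` has exactly two nonzero entries, in rows `t` and `t + 1`, so a vanishing
combination of rows is a two-term recurrence `α_t (n+1-t) l₀ + α_{t+1} (t+1) l₁ = 0` (and the same
with `r₀, r₁`) for `t = 2, …, n-2`. As `l₁ ≠ 0`, the recurrence determines `α` from `α₂`.
Eliminating `α_{t+1}` between the `L`- and `R`-equations at `t = 2` gives
`α₂ (n-1) (l₀r₁ - r₀l₁) = 0`, so without the Projections Relation `α₂ = 0` and hence `α = 0`.
With it, `l₀ = κ l₁` and `r₀ = κ r₁`, and `C(n+1,s) (-1)^s κ^(s-2)` solves both recurrences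
thanks to `C(n+1,t+1) (t+1) = C(n+1,t) (n+1-t)`; normalising at `s = 2`, where it equals
`n(n+1)/2`, gives the formula.
-/

open Finset

/-- entry of the "Middle" system matrix in the column `(t, L)`. -/
noncomputable def entL (n : ℕ) (l0 l1 : ℝ) (s t : ℕ) : ℝ :=
  if s = t then ((n : ℝ) + 1 - (t : ℝ)) * l0
  else if s = t + 1 then ((t : ℝ) + 1) * l1
  else 0

/-- entry of the "Middle" system matrix in the column `(t, R)`. -/
noncomputable def entR (n : ℕ) (r0 r1 : ℝ) (s t : ℕ) : ℝ :=
  if s = t then ((n : ℝ) + 1 - (t : ℝ)) * r0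
  else if s = t + 1 then ((t : ℝ) + 1) * r1
  else 0

def ColumnRecurrence (n : ℕ) (c0 c1 : ℝ) (α : ℕ → ℝ) : Prop :=
  ∀ t, 2 ≤ t → t ≤ n - 2 →
    α t * (((n : ℝ) + 1 - t) * c0) + α (t + 1) * (((t : ℝ) + 1) * c1) = 0

namespace ColumnRecurrence

variable {n : ℕ} {c0 c1 : ℝ} {α β : ℕ → ℝ}

theorem sub (hα : ColumnRecurrence n c0 c1 α) (hβ : ColumnRecurrence n c0 c1 β) :
    ColumnRecurrence n c0 c1 (α - β) := fun t ht2 htn => by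
  simp only [Pi.sub_apply]
  linear_combination hα t ht2 htn - hβ t ht2 htn

theorem const_mul (a : ℝ) (hα : ColumnRecurrence n c0 c1 α) :
    ColumnRecurrence n c0 c1 (fun s => a * α s) := fun t ht2 htn => by
  linear_combination a * hα t ht2 htn

theorem eq_zero (hc1 : c1 ≠ 0) (hα : ColumnRecurrence n c0 c1 α) (h2 : α 2 = 0) :
    ∀ s, 2 ≤ s → s ≤ n - 1 → α s = 0 := by
  intro s hs2
  induction s, hs2 using Nat.le_induction with
  | base => exact fun _ => h2
  | succ t ht2 ih =>
    intro htn
    have hrec := hα t ht2 (by omega)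
    rw [ih (by omega), zero_mul, zero_add] at hrec
    exact (mul_eq_zero.1 hrec).resolve_right (mul_ne_zero (by positivity) hc1)

end ColumnRecurrence

theorem sum_mul_entL {n t : ℕ} (ht2 : 2 ≤ t) (htn : t ≤ n - 2) (c0 c1 : ℝ) (α : ℕ → ℝ) :
    ∑ s ∈ Icc 2 (n - 1), α s * entL n c0 c1 s t
      = α t * (((n : ℝ) + 1 - t) * c0) + α (t + 1) * (((t : ℝ) + 1) * c1) := by
  rw [sum_eq_add_of_mem t (t + 1) (by rw [mem_Icc]; omega) (by rw [mem_Icc]; omega) (by omega)]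
  · simp [entL]
  · intro s _ ⟨hst, hst1⟩
    simp [entL, hst, hst1]

theorem columnRecurrence_iff_sum_mul_entL_eq_zero {n : ℕ} {c0 c1 : ℝ} {α : ℕ → ℝ} :
    ColumnRecurrence n c0 c1 α ↔
      ∀ t, 2 ≤ t → t ≤ n - 2 → ∑ s ∈ Icc 2 (n - 1), α s * entL n c0 c1 s t = 0 := by
  refine forall₃_congr fun t ht2 htn => ?_
  rw [sum_mul_entL ht2 htn]

theorem entR_eq_entL : entR = entL := rfl

theorem sums_mul_ent_eq_zero_iff {n : ℕ} {l0 l1 r0 r1 : ℝ} {α : ℕ → ℝ} :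
    (∀ t, 2 ≤ t → t ≤ n - 2 →
        (∑ s ∈ Icc 2 (n - 1), α s * entL n l0 l1 s t) = 0 ∧
        (∑ s ∈ Icc 2 (n - 1), α s * entR n r0 r1 s t) = 0) ↔
      ColumnRecurrence n l0 l1 α ∧ ColumnRecurrence n r0 r1 α := by
  simp only [columnRecurrence_iff_sum_mul_entL_eq_zero, entR_eq_entL]
  exact ⟨fun h => ⟨fun t ht2 htn => (h t ht2 htn).1, fun t ht2 htn => (h t ht2 htn).2⟩,
    fun h t ht2 htn => ⟨h.1 t ht2 htn, h.2 t ht2 htn⟩⟩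

theorem apply_two_eq_zero_of_columnRecurrence {n : ℕ} (hn : 4 ≤ n) {l0 l1 r0 r1 : ℝ}
    (hD : l0 * r1 - r0 * l1 ≠ 0) {α : ℕ → ℝ} (hL : ColumnRecurrence n l0 l1 α)
    (hR : ColumnRecurrence n r0 r1 α) : α 2 = 0 := by
  have hn1 : (n : ℝ) - 1 ≠ 0 := by
    have : (4 : ℝ) ≤ n := by exact_mod_cast hn
    linarith
  have h : α 2 * (((n : ℝ) - 1) * (l0 * r1 - r0 * l1)) = 0 := by
    linear_combination r1 * hL 2 le_rfl (by omega) - l1 * hR 2 le_rfl (by omega)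
  exact (mul_eq_zero.1 h).resolve_right (mul_ne_zero hn1 hD)

noncomputable def rowCoeff (n : ℕ) (κ : ℝ) (s : ℕ) : ℝ :=
  ((n + 1).choose s : ℝ) * (-1) ^ s * κ ^ (s - 2)

theorem rowCoeff_two (n : ℕ) (κ : ℝ) : rowCoeff n κ 2 = (n : ℝ) * (n + 1) / 2 := by
  rw [rowCoeff, Nat.cast_choose_two]
  push_cast
  ring

theorem cast_choose_succ_mul_succ {n t : ℕ} (h : t ≤ n) :
    (n.choose (t + 1) : ℝ) * (t + 1) = n.choose t * (n - t) := by
  exact_mod_cast Nat.choose_succ_right_eq n t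

theorem columnRecurrence_rowCoeff (n : ℕ) (κ b : ℝ) :
    ColumnRecurrence n (κ * b) b (rowCoeff n κ) := by
  intro t ht2 htn
  have hch := cast_choose_succ_mul_succ (n := n + 1) (t := t) (by omega)
  have hpow : κ ^ (t + 1 - 2) = κ ^ (t - 2) * κ := by
    rw [show t + 1 - 2 = t - 2 + 1 by omega, pow_succ]
  push_cast at hch
  rw [rowCoeff, rowCoeff, hpow, pow_succ]
  linear_combination (-(-1 : ℝ) ^ t * κ ^ (t - 2) * κ * b) * hch

theorem ColumnRecurrence.eq_rowCoeff_mul {n : ℕ} (hn : n ≠ 0) {l0 l1 : ℝ} (hl1 : l1 ≠ 0)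
    {α : ℕ → ℝ} (hα : ColumnRecurrence n l0 l1 α) :
    ∀ s, 2 ≤ s → s ≤ n - 1 →
      α s = 2 / ((n : ℝ) * (n + 1)) * rowCoeff n (l0 / l1) s * α 2 := by
  set β : ℕ → ℝ := fun s => 2 / ((n : ℝ) * (n + 1)) * α 2 * rowCoeff n (l0 / l1) s
  have hβ : ColumnRecurrence n l0 l1 β := by
    have hc := columnRecurrence_rowCoeff n (l0 / l1) l1
    rw [div_mul_cancel₀ _ hl1] at hc
    exact hc.const_mul _
  have hβ2 : β 2 = α 2 := by
    simp only [β, rowCoeff_two]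
    field_simp
  intro s hs2 hsn
  have hαβ := (hα.sub hβ).eq_zero hl1 (by simp [hβ2]) s hs2 hsn
  rw [Pi.sub_apply, sub_eq_zero] at hαβ
  rw [hαβ]
  ring

theorem stmt10_general (n : ℕ) (hn : 4 ≤ n)
    (l0 l1 r0 r1 : ℝ)
    (hl1 : l1 ≠ 0) (hr1 : r1 ≠ 0) :
    ((∃ α : ℕ → ℝ,
        (∃ s, 2 ≤ s ∧ s ≤ n - 1 ∧ α s ≠ 0) ∧
        (∀ t, 2 ≤ t → t ≤ n - 2 →
          (∑ s ∈ Icc 2 (n - 1), α s * entL n l0 l1 s t) = 0 ∧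
          (∑ s ∈ Icc 2 (n - 1), α s * entR n r0 r1 s t) = 0))
      ↔ l0 * r1 - r0 * l1 = 0) ∧
    (l0 * r1 = r0 * l1 →
      l0 / l1 = r0 / r1 ∧
      ∀ α : ℕ → ℝ,
        (∃ s, 2 ≤ s ∧ s ≤ n - 1 ∧ α s ≠ 0) →
        (∀ t, 2 ≤ t → t ≤ n - 2 →
          (∑ s ∈ Icc 2 (n - 1), α s * entL n l0 l1 s t) = 0 ∧
          (∑ s ∈ Icc 2 (n - 1), α s * entR n r0 r1 s t) = 0) →
        ∀ s, 2 ≤ s → s ≤ n - 1 →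
          α s = (2 / ((n : ℝ) * ((n : ℝ) + 1))) * ((n + 1).choose s : ℝ) *
            (-1 : ℝ) ^ s * (l0 / l1) ^ (s - 2) * α 2) := by
  simp only [sums_mul_ent_eq_zero_iff]
  refine ⟨⟨?_, fun hD => ?_⟩, fun h => ⟨(div_eq_div_iff hl1 hr1).2 h, ?_⟩⟩
  · rintro ⟨α, ⟨s, hs2, hsn, hs⟩, hL, hR⟩
    by_contra hD
    exact hs (hL.eq_zero hl1 (apply_two_eq_zero_of_columnRecurrence hn hD hL hR) s hs2 hsn)
  · refine ⟨rowCoeff n (l0 / l1), ⟨2, le_rfl, by omega, ?_⟩, ?_, ?_⟩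
    · rw [rowCoeff_two]
      positivity
    · convert columnRecurrence_rowCoeff n (l0 / l1) l1 using 2
      exact (div_mul_cancel₀ _ hl1).symm
    · convert columnRecurrence_rowCoeff n (l0 / l1) r1 using 2
      field_simp
      linarith
  · rintro α - ⟨hL, -⟩ s hs2 hsn
    rw [hL.eq_rowCoeff_mul (by omega) hl1 s hs2 hsn, rowCoeff]
    ring

/-- (a) A nontrivial vanishing linear combination of the rows of the "Middle" system
matrix exists iff the "Projections Relation" `l₀r₁ − r₀l₁ = 0` holds; (b) when it holds,
`κ := l₀/l₁ = r₀/r₁` and the coefficients of any such combination are given by the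
explicit formula `α_s = (2/(n(n+1)))·C(n+1,s)·(−1)^s·κ^(s−2)·α₂`. -/
theorem stmt10 (n : ℕ) (hn : 4 ≤ n)
    (l0 l1 r0 r1 : ℝ)
    (hl0 : l0 ≠ 0) (hl1 : l1 ≠ 0) (hr0 : r0 ≠ 0) (hr1 : r1 ≠ 0) :
    ((∃ α : ℕ → ℝ,
        (∃ s, 2 ≤ s ∧ s ≤ n - 1 ∧ α s ≠ 0) ∧
        (∀ t, 2 ≤ t → t ≤ n - 2 →
          (∑ s ∈ Icc 2 (n - 1), α s * entL n l0 l1 s t) = 0 ∧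
          (∑ s ∈ Icc 2 (n - 1), α s * entR n r0 r1 s t) = 0))
      ↔ l0 * r1 - r0 * l1 = 0) ∧
    (l0 * r1 = r0 * l1 →
      l0 / l1 = r0 / r1 ∧
      ∀ α : ℕ → ℝ,
        (∃ s, 2 ≤ s ∧ s ≤ n - 1 ∧ α s ≠ 0) →
        (∀ t, 2 ≤ t → t ≤ n - 2 →
          (∑ s ∈ Icc 2 (n - 1), α s * entL n l0 l1 s t) = 0 ∧
          (∑ s ∈ Icc 2 (n - 1), α s * entR n r0 r1 s t) = 0) →
        ∀ s, 2 ≤ s → s ≤ n - 1 →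
          α s = (2 / ((n : ℝ) * ((n : ℝ) + 1))) * ((n + 1).choose s : ℝ) *
            (-1 : ℝ) ^ s * (l0 / l1) ^ (s - 2) * α 2) :=
  stmt10_general n hn l0 l1 r0 r1 hl1 hr1
end

section
/- Let n ≥ 4 be an integer and let l₀, l₁, r₀, r₁ be nonzero reals. Let Â be the real matrix with rows indexed by s ∈ {2,…,n−1} and columns indexed by pairs (t,σ) with t ∈ {2,…,n−2} and σ ∈ {L,R}, with entries Â[s,(t,L)] = (n+1−t)·l₀ if s = t, (t+1)·l₁ if s = t+1, 0 otherwise, and Â[s,(t,R)] = (n+1−t)·r₀ if s = t, (t+1)·r₁ if s = t+1, 0 otherwise. Then the rank of Â equals n−2 (full row rank) if l₀r₁ − r₀l₁ ≠ 0, i.e. when the "Projections Relation" does not hold, and the rank of Â equals n−3 if l₀r₁ − r₀l₁ = 0, i.e. when the "Projections Relation" holds. -/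
/-!
Column `(j, σ)` of `Â` is `a_j σ₀ e_j + b_j σ₁ e_{j+1}` with `a_j, b_j > 0`. When
`l₀r₁ − r₀l₁ ≠ 0` the two columns with index `j` form a nonsingular `2 × 2` block on
`e_j, e_{j+1}`, so together they span the whole space. When it vanishes, every R-column is a
multiple of the L-column with the same index, and the `n − 3` L-columns, cut down to their first
`n − 3` rows, form a lower triangular matrix with nonzero diagonal.
-/

open Matrix Submodule

variable {K : Type*} [Field K]

theorem mem_span_pair_of_det_ne_zero {M : Type*} [AddCommGroup M] [Module K M] {a b c d : K}
    (h : a * d - b * c ≠ 0) (x y : M) : x ∈ span K {a • x + b • y, c • x + d • y} := by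
  refine mem_span_pair.2 ⟨(a * d - b * c)⁻¹ * d, -((a * d - b * c)⁻¹ * b), ?_⟩
  match_scalars <;> field_simp <;> ring

def unitVec (k j : ℕ) : Fin k → K := fun i => if (i : ℕ) = j then 1 else 0

theorem unitVec_val {k : ℕ} (i : Fin k) : (unitVec k i : Fin k → K) = Pi.single i 1 := by
  ext i'
  simp [unitVec, Pi.single_apply, Fin.ext_iff]

theorem eq_smul_unitVec_add_smul_unitVec {k j : ℕ} {a b : K} {v : Fin k → K}
    (hv : ∀ i : Fin k, v i = if (i : ℕ) = j then a else if (i : ℕ) = j + 1 then b else 0) :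
    v = a • unitVec k j + b • unitVec k (j + 1) := by
  ext i
  rw [hv]
  by_cases h : (i : ℕ) = j <;> simp [unitVec, h]

namespace BidiagonalPair

variable {k m : ℕ} {A : Matrix (Fin k) (Fin m × Bool) K} {a b : Fin m → K} {l0 l1 r0 r1 : K}

theorem rank_eq_of_det_ne_zero
    (hL : ∀ j, A.col (j, true) = (a j * l0) • unitVec k j + (b j * l1) • unitVec k (j + 1))
    (hR : ∀ j, A.col (j, false) = (a j * r0) • unitVec k j + (b j * r1) • unitVec k (j + 1))
    (ha : ∀ j, a j ≠ 0) (hb : ∀ j, b j ≠ 0) (hk : k = m + 1) (hm : 0 < m)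
    (hd : l0 * r1 - r0 * l1 ≠ 0) : A.rank = k := by
  rw [rank_eq_finrank_span_cols]
  set S := span K (Set.range A.col)
  have hpair : ∀ j, span K {A.col (j, true), A.col (j, false)} ≤ S := fun j =>
    span_le.2 (Set.pair_subset (subset_span ⟨_, rfl⟩) (subset_span ⟨_, rfl⟩))
  have hdet : ∀ j, (a j * l0) * (b j * r1) - (b j * l1) * (a j * r0) ≠ 0 := fun j => by
    have : (a j * l0) * (b j * r1) - (b j * l1) * (a j * r0) = a j * b j * (l0 * r1 - r0 * l1) := by
      ring
    rw [this]
    exact mul_ne_zero (mul_ne_zero (ha j) (hb j)) hd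
  have hleft : ∀ j : Fin m, unitVec k j ∈ S := fun j => hpair j <| by
    rw [hL, hR]
    exact mem_span_pair_of_det_ne_zero (hdet j) _ _
  have hright : ∀ j : Fin m, unitVec k (j + 1) ∈ S := fun j => hpair j <| by
    rw [hL, hR, add_comm, add_comm (_ • unitVec k j)]
    refine mem_span_pair_of_det_ne_zero ?_ _ _
    rw [← neg_sub]
    exact neg_ne_zero.2 (hdet j)
  have hunit : ∀ i : Fin k, unitVec k i ∈ S := by
    intro i
    obtain hi | hi : (i : ℕ) < m ∨ (i : ℕ) = m - 1 + 1 := by omega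
    · exact hleft ⟨i, hi⟩
    · rw [hi]
      exact hright ⟨m - 1, by omega⟩
  have htop : S = ⊤ := eq_top_iff.2 <| (Pi.basisFun K (Fin k)).span_eq.symm.le.trans <|
    span_le.2 <| Set.range_subset_iff.2 fun i => by
      rw [Pi.basisFun_apply, ← unitVec_val]
      exact hunit i
  rw [htop, finrank_top, Module.finrank_fin_fun]

theorem rank_eq_of_det_eq_zero
    (hL : ∀ j, A.col (j, true) = (a j * l0) • unitVec k j + (b j * l1) • unitVec k (j + 1))
    (hR : ∀ j, A.col (j, false) = (a j * r0) • unitVec k j + (b j * r1) • unitVec k (j + 1))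
    (ha : ∀ j, a j ≠ 0) (hl0 : l0 ≠ 0) (hmk : m ≤ k) (hd : l0 * r1 - r0 * l1 = 0) :
    A.rank = m := by
  have hprop : ∀ j, A.col (j, false) = (r0 / l0) • A.col (j, true) := fun j => by
    rw [hL, hR]
    match_scalars
    · field_simp
    · field_simp
      linear_combination b j * hd
  have hle : A.rank ≤ m := by
    rw [rank_eq_finrank_span_cols]
    calc _ ≤ Set.finrank K (Set.range fun j => A.col (j, true)) := by
          refine Submodule.finrank_mono (span_le.2 (Set.range_subset_iff.2 ?_))
          rintro ⟨j, _ | _⟩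
          · rw [hprop]
            exact smul_mem _ _ (subset_span ⟨j, rfl⟩)
          · exact subset_span ⟨j, rfl⟩
      _ ≤ m := (finrank_range_le_card _).trans_eq (Fintype.card_fin m)
  have hentry : ∀ (i : Fin m) j, A (Fin.castLE hmk i) (j, true) =
      (if i = j then a j * l0 else 0) + (if (i : ℕ) = j + 1 then b j * l1 else 0) := by
    intro i j
    simpa [unitVec, Fin.ext_iff] using congrFun (hL j) (Fin.castLE hmk i)
  set B := A.submatrix (Fin.castLE hmk) (fun j => (j, true))
  have hB : B.IsLowerTriangular := fun i j hij => by
    have hij : (i : ℕ) < j := hij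
    simp only [B, submatrix_apply, hentry, if_neg (Fin.ne_of_lt hij),
      if_neg (show (i : ℕ) ≠ j + 1 by omega), add_zero]
  have hdet : B.det ≠ 0 := by
    rw [det_of_isLowerTriangular B hB]
    exact Finset.prod_ne_zero_iff.2 fun i _ => by simpa [B, hentry] using mul_ne_zero (ha i) hl0
  have hge : m ≤ A.rank :=
    calc m = B.rank := by rw [rank_of_det_ne_zero hdet, Fintype.card_fin]
      _ ≤ A.rank := rank_submatrix_le _ _ _
  exact le_antisymm hle hge

end BidiagonalPair

theorem stmt12_general (n : ℕ) (hn : 4 ≤ n)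
    (l0 l1 r0 r1 : ℝ)
    (hl0 : l0 ≠ 0)
    (A : Matrix (Fin (n - 2)) (Fin (n - 3) × Bool) ℝ)
    (hAL : ∀ (i : Fin (n - 2)) (j : Fin (n - 3)),
      A i (j, true) =
        if (i : ℕ) = (j : ℕ) then ((n : ℝ) + 1 - (((j : ℕ) + 2 : ℕ) : ℝ)) * l0
        else if (i : ℕ) = (j : ℕ) + 1 then ((((j : ℕ) + 2 : ℕ) : ℝ) + 1) * l1
        else 0)
    (hAR : ∀ (i : Fin (n - 2)) (j : Fin (n - 3)),
      A i (j, false) =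
        if (i : ℕ) = (j : ℕ) then ((n : ℝ) + 1 - (((j : ℕ) + 2 : ℕ) : ℝ)) * r0
        else if (i : ℕ) = (j : ℕ) + 1 then ((((j : ℕ) + 2 : ℕ) : ℝ) + 1) * r1
        else 0) :
    (l0 * r1 - r0 * l1 ≠ 0 → A.rank = n - 2) ∧
    (l0 * r1 - r0 * l1 = 0 → A.rank = n - 3) := by
  let a : Fin (n - 3) → ℝ := fun j => (n : ℝ) + 1 - (((j : ℕ) + 2 : ℕ) : ℝ)
  let b : Fin (n - 3) → ℝ := fun j => (((j : ℕ) + 2 : ℕ) : ℝ) + 1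
  have ha : ∀ j, a j ≠ 0 := fun j =>
    (sub_pos.2 (by exact_mod_cast (by omega : (j : ℕ) + 2 < n + 1))).ne'
  have hb : ∀ j, b j ≠ 0 := fun j => by positivity
  have hL : ∀ j, A.col (j, true) = (a j * l0) • unitVec _ j + (b j * l1) • unitVec _ (j + 1) :=
    fun j => eq_smul_unitVec_add_smul_unitVec (hAL · j)
  have hR : ∀ j, A.col (j, false) = (a j * r0) • unitVec _ j + (b j * r1) • unitVec _ (j + 1) :=
    fun j => eq_smul_unitVec_add_smul_unitVec (hAR · j)
  exact ⟨BidiagonalPair.rank_eq_of_det_ne_zero hL hR ha hb (by omega) (by omega),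
    BidiagonalPair.rank_eq_of_det_eq_zero hL hR ha hl0 (by omega)⟩

/-- Rank of the "Middle" system matrix `Â` (rows indexed by `s = i+2 ∈ {2,…,n−1}`,
columns by `(t,σ)` with `t = j+2 ∈ {2,…,n−2}` and `σ ∈ {L,R}` modeled by `Bool`,
`true` standing for `L`): full row rank `n−2` when the "Projections Relation"
`l₀r₁ − r₀l₁ = 0` fails and rank `n−3` when it holds. -/
theorem stmt12 (n : ℕ) (hn : 4 ≤ n)
    (l0 l1 r0 r1 : ℝ)
    (hl0 : l0 ≠ 0) (hl1 : l1 ≠ 0) (hr0 : r0 ≠ 0) (hr1 : r1 ≠ 0)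
    (A : Matrix (Fin (n - 2)) (Fin (n - 3) × Bool) ℝ)
    (hAL : ∀ (i : Fin (n - 2)) (j : Fin (n - 3)),
      A i (j, true) =
        if (i : ℕ) = (j : ℕ) then ((n : ℝ) + 1 - (((j : ℕ) + 2 : ℕ) : ℝ)) * l0
        else if (i : ℕ) = (j : ℕ) + 1 then ((((j : ℕ) + 2 : ℕ) : ℝ) + 1) * l1
        else 0)
    (hAR : ∀ (i : Fin (n - 2)) (j : Fin (n - 3)),
      A i (j, false) =
        if (i : ℕ) = (j : ℕ) then ((n : ℝ) + 1 - (((j : ℕ) + 2 : ℕ) : ℝ)) * r0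
        else if (i : ℕ) = (j : ℕ) + 1 then ((((j : ℕ) + 2 : ℕ) : ℝ) + 1) * r1
        else 0) :
    (l0 * r1 - r0 * l1 ≠ 0 → A.rank = n - 2) ∧
    (l0 * r1 - r0 * l1 = 0 → A.rank = n - 3) :=
  stmt12_general n hn l0 l1 r0 r1 hl0 A hAL hAR
end

section
/- Let n ≥ 1 be an integer, let κ ≠ 0 and α₂ be reals, let c₀, c₁, c₂ ∈ ℝ, and let ΔC₀,…,ΔC_{n−1} ∈ ℝ (with ΔC_j = 0 for j outside 0,…,n−1). For s = 0,…,n+1 define α_s = (2/(n(n+1)))·C(n+1,s)·(−1)^s·κ^{s−2}·α₂ and sumC_s = (1/n)[(n−s)(n+1−s)·c₀·ΔC_s + 2s(n+1−s)·c₁·ΔC_{s−1} + s(s−1)·c₂·ΔC_{s−2}]. Then −∑_{s=0}^{n+1} α_s · sumC_s = −(2α₂/(n·κ²)) · (∑_{s=0}^{n−1} (−1)^s C(n−1,s) κ^s ΔC_s) · (c₀ − 2κc₁ + κ²c₂). -/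
/-!
With `κ ^ (s - 2) = κ ^ s / κ ^ 2`, the parts of `sumC_s` carrying `ΔC_{s-1}` and `ΔC_{s-2}` are
shifted back onto `ΔC_j`, `j < n`. The weights `C(n+1,j)(n-j)(n+1-j)`, `C(n+1,j+1)(j+1)(n-j)` and
`C(n+1,j+2)(j+2)(j+1)` that `ΔC_j` then receives from the three parts, with powers `(-κ)^j`,
`(-κ)^(j+1)`, `(-κ)^(j+2)`, all equal `n(n+1) C(n-1,j)`, so `c₀ - 2κc₁ + κ²c₂` factors out.
-/

open Finset

namespace Nat

theorem add_two_choose_add_two_mul (i j : ℕ) :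
    (i + j + 2).choose (j + 2) * ((j + 1) * (j + 2))
      = (i + j + 1) * (i + j + 2) * (i + j).choose j := by
  have h₁ := add_one_mul_choose_eq (i + j + 1) (j + 1)
  have h₂ := add_one_mul_choose_eq (i + j) j
  calc (i + j + 2).choose (j + 2) * ((j + 1) * (j + 2))
      = (i + j + 1 + 1).choose (j + 1 + 1) * (j + 1 + 1) * (j + 1) := by ring_nf
    _ = (i + j + 2) * ((i + j + 1).choose (j + 1) * (j + 1)) := by rw [← h₁]; ring
    _ = (i + j + 1) * (i + j + 2) * (i + j).choose j := by rw [← h₂]; ring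

theorem add_two_choose_mul (i j : ℕ) :
    (i + j + 2).choose j * ((i + 1) * (i + 2))
      = (i + j + 1) * (i + j + 2) * (i + j).choose j := by
  have h := add_two_choose_add_two_mul j i
  rwa [add_comm j i, choose_symm_of_eq_add (show i + j + 2 = i + 2 + j by ring),
    choose_symm_add] at h

theorem add_two_choose_add_one_mul (i j : ℕ) :
    (i + j + 2).choose (j + 1) * ((i + 1) * (j + 1))
      = (i + j + 1) * (i + j + 2) * (i + j).choose j := by
  have h₁ := add_one_mul_choose_eq (i + j + 1) j
  have h₂ := add_one_mul_choose_eq (i + j) i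
  rw [choose_symm_of_eq_add (show i + j + 1 = j + (i + 1) by ring)] at h₁
  rw [choose_symm_add] at h₂
  calc (i + j + 2).choose (j + 1) * ((i + 1) * (j + 1))
      = (i + j + 1 + 1).choose (j + 1) * (j + 1) * (i + 1) := by ring_nf
    _ = (i + j + 2) * ((i + j + 1).choose (i + 1) * (i + 1)) := by rw [← h₁]; ring
    _ = (i + j + 1) * (i + j + 2) * (i + j).choose j := by rw [← h₂]; ring

end Nat

/-- Since `s - 1` and `s - 2` truncate in `ℕ`, the terms with `s < 1`, resp. `s < 2`, must vanish
through `b`, resp. `c`. -/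
theorem sum_range_add_two_shifted {R : Type*} [NonUnitalSemiring R] {n : ℕ} {d : ℕ → R}
    (hd : ∀ j, n ≤ j → d j = 0) (f a b c : ℕ → R) (hb : b 0 = 0) (hc₀ : c 0 = 0) (hc₁ : c 1 = 0) :
    ∑ s ∈ range (n + 2), f s * (a s * d s + b s * d (s - 1) + c s * d (s - 2)) =
      ∑ j ∈ range n, (f j * a j + f (j + 1) * b (j + 1) + f (j + 2) * c (j + 2)) * d j := by
  simp only [mul_add, add_mul, sum_add_distrib, ← mul_assoc]
  rw [sum_range_succ (fun s => f s * a s * d s), sum_range_succ (fun s => f s * a s * d s),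
    sum_range_succ' (fun s => f s * b s * d (s - 1)),
    sum_range_succ (fun s => f (s + 1) * b (s + 1) * d (s + 1 - 1)),
    sum_range_succ' (fun s => f s * c s * d (s - 2)),
    sum_range_succ' (fun s => f (s + 1) * c (s + 1) * d (s + 1 - 2))]
  simp [hd n le_rfl, hd (n + 1) (by omega), hb, hc₀, hc₁]

theorem choose_shifted_combination_eq (n j : ℕ) (hj : j < n) (x c₀ c₁ c₂ : ℝ) :
    (n + 1).choose j * x ^ j * (((n : ℝ) - j) * ((n : ℝ) + 1 - j)) * c₀
      + (n + 1).choose (j + 1) * x ^ (j + 1) *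
          (2 * ((j + 1 : ℕ) : ℝ) * ((n : ℝ) + 1 - ((j + 1 : ℕ) : ℝ))) * c₁
      + (n + 1).choose (j + 2) * x ^ (j + 2) * (((j + 2 : ℕ) : ℝ) * (((j + 2 : ℕ) : ℝ) - 1)) * c₂
    = n * (n + 1) * (n - 1).choose j * x ^ j * (c₀ + 2 * x * c₁ + x ^ 2 * c₂) := by
  obtain ⟨i, rfl⟩ := Nat.exists_eq_add_of_lt hj
  have h₀ := congrArg (Nat.cast (R := ℝ)) (Nat.add_two_choose_mul i j)
  have h₁ := congrArg (Nat.cast (R := ℝ)) (Nat.add_two_choose_add_one_mul i j)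
  have h₂ := congrArg (Nat.cast (R := ℝ)) (Nat.add_two_choose_add_two_mul i j)
  rw [show j + i + 1 + 1 = i + j + 2 by omega, show j + i + 1 - 1 = i + j by omega]
  push_cast at h₀ h₁ h₂ ⊢
  linear_combination x ^ j * c₀ * h₀ + 2 * x ^ (j + 1) * c₁ * h₁ + x ^ (j + 2) * c₂ * h₂

/-- The linear combination `−∑_{s=0}^{n+1} α_s · sumC_s` of the right-side coefficients
of the "Middle" system, with `α_s = (2/(n(n+1)))·C(n+1,s)·(−1)^s·κ^{s−2}·α₂`, equals
`−(2α₂/(nκ²)) · (∑_{s} (−1)^s C(n−1,s) κ^s ΔC_s) · (c₀ − 2κc₁ + κ²c₂)`. -/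
theorem stmt13 (n : ℕ) (hn : 1 ≤ n) (κ α2 c0 c1 c2 : ℝ) (hκ : κ ≠ 0)
    (dC : ℕ → ℝ) (hdC : ∀ j, n ≤ j → dC j = 0) :
    -(∑ s ∈ range (n + 2),
        ((2 / ((n : ℝ) * ((n : ℝ) + 1))) * ((n + 1).choose s : ℝ) * (-1 : ℝ) ^ s *
            κ ^ ((s : ℤ) - 2) * α2) *
          ((1 / (n : ℝ)) * (((n : ℝ) - (s : ℝ)) * ((n : ℝ) + 1 - (s : ℝ)) * c0 * dC s
            + 2 * (s : ℝ) * ((n : ℝ) + 1 - (s : ℝ)) * c1 * dC (s - 1)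
            + (s : ℝ) * ((s : ℝ) - 1) * c2 * dC (s - 2))))
    = -(2 * α2 / ((n : ℝ) * κ ^ 2)) *
        (∑ s ∈ range n, (-1 : ℝ) ^ s * ((n - 1).choose s : ℝ) * κ ^ s * dC s) *
        (c0 - 2 * κ * c1 + κ ^ 2 * c2) := by
  have hn₀ : (n : ℝ) ≠ 0 := by positivity
  simp only [mul_left_comm _ (1 / (n : ℝ)), ← mul_sum]
  rw [sum_range_add_two_shifted hdC _ _ _ _ (by simp) (by simp) (by simp)]
  simp only [mul_sum, sum_mul, ← sum_neg_distrib]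
  refine sum_congr rfl fun j hj => ?_
  have h := choose_shifted_combination_eq n j (mem_range.mp hj) (-κ) c0 c1 c2
  simp only [zpow_sub₀ hκ, zpow_natCast, neg_pow κ] at h ⊢
  field_simp
  linear_combination -(α2 * dC j) * h
end

section
/- Consider two adjacent bilinearly parametrised quadrilateral elements with vertices λ̃, λ̃', γ̃, γ̃', ρ̃, ρ̃' ∈ ℝ², where both the left quadrilateral (λ̃, γ̃, γ̃', λ̃') and the right quadrilateral (γ̃, ρ̃, ρ̃', γ̃') are strictly convex in counterclockwise order (this guarantees that the weight coefficients l₀, l₁, r₀, r₁ are nonzero). Suppose the "Projections Relation" l₀r₁ = r₀l₁ holds, and set κ = l₀/l₁ (= r₀/r₁). Then the coefficients of the weight function c satisfy c₀ − 2κ·c₁ + κ²·c₂ = 0. -/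
section Cross2

variable (a b c : ℝ × ℝ) (s : ℝ)

theorem cross2_anticomm : cross2 a b = -cross2 b a := by
  simp only [cross2]; ring

theorem cross2_neg_left : cross2 (-a) b = -cross2 a b := by
  simp only [cross2, Prod.fst_neg, Prod.snd_neg]; ring

theorem cross2_neg_right : cross2 a (-b) = -cross2 a b := by
  simp only [cross2, Prod.fst_neg, Prod.snd_neg]; ring

theorem cross2_sub_left : cross2 (a - b) c = cross2 a c - cross2 b c := by
  simp only [cross2, Prod.fst_sub, Prod.snd_sub]; ring

theorem cross2_sub_right : cross2 a (b - c) = cross2 a b - cross2 a c := by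
  simp only [cross2, Prod.fst_sub, Prod.snd_sub]; ring

theorem cross2_smul_left : cross2 (s • a) b = s * cross2 a b := by
  simp only [cross2, Prod.smul_fst, Prod.smul_snd, smul_eq_mul]; ring

theorem cross2_smul_right : cross2 a (s • b) = s * cross2 a b := by
  simp only [cross2, Prod.smul_fst, Prod.smul_snd, smul_eq_mul]; ring

theorem cross2_smul_sub_cross2_smul :
    cross2 b c • a - cross2 a c • b = -(cross2 a b • c) := by
  ext <;> simp only [cross2, Prod.fst_sub, Prod.snd_sub, Prod.smul_fst, Prod.smul_snd,
    Prod.fst_neg, Prod.snd_neg, smul_eq_mul] <;> ring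

end Cross2

theorem cross2_weight_form_eq (a b p q u : ℝ × ℝ) :
    cross2 a p * cross2 b u ^ 2 - cross2 a u * cross2 b u * (cross2 a q - cross2 p b)
      + cross2 a u ^ 2 * cross2 b q
      = cross2 a b * (cross2 b u * cross2 p u - cross2 a u * cross2 q u) := by
  set l₀ := cross2 a u
  set l₁ := cross2 b u
  calc _ = cross2 (l₁ • a - l₀ • b) (l₁ • p - l₀ • q) := by
        simp only [cross2_sub_left, cross2_sub_right, cross2_smul_left, cross2_smul_right,
          cross2_anticomm b p]
        ring
    _ = cross2 (-(cross2 a b • u)) (l₁ • p - l₀ • q) := by rw [cross2_smul_sub_cross2_smul]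
    _ = _ := by
        simp only [cross2_neg_left, cross2_smul_left, cross2_sub_right, cross2_smul_right,
          cross2_anticomm u p, cross2_anticomm u q]
        ring

theorem stmt14_general (lam lam' gam gam' rho rho' : ℝ × ℝ)
    (hconvR3 : 0 < cross2 (gam' - rho') (gam - gam'))
    (l0 l1 r0 r1 c0 c1 c2 : ℝ)
    (hl0 : l0 = cross2 (rho - gam) (gam' - gam))
    (hl1 : l1 = cross2 (gam - gam') (rho' - gam'))
    (hr0 : r0 = -cross2 (gam' - gam) (lam - gam))
    (hr1 : r1 = -cross2 (lam' - gam') (gam - gam'))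
    (hc0 : c0 = cross2 (rho - gam) (lam - gam))
    (hc1 : c1 = (1/2) * (cross2 (rho - gam) (lam' - gam') - cross2 (lam - gam) (rho' - gam')))
    (hc2 : c2 = -cross2 (lam' - gam') (rho' - gam'))
    (hPR : l0 * r1 = r0 * l1) :
    c0 - 2 * (l0 / l1) * c1 + (l0 / l1) ^ 2 * c2 = 0 := by
  rw [← neg_sub gam' gam, cross2_neg_left, ← cross2_anticomm] at hl1
  rw [← neg_sub gam' gam, cross2_neg_right, neg_neg] at hr1
  rw [← cross2_anticomm] at hr0 hc2
  have hl1_ne : l1 ≠ 0 := by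
    rw [← neg_sub rho' gam', ← neg_sub gam' gam, cross2_neg_left, cross2_neg_right, neg_neg,
      ← hl1] at hconvR3
    exact hconvR3.ne'
  have hform : c0 * l1 ^ 2 - 2 * l0 * l1 * c1 + l0 ^ 2 * c2 = 0 := by
    have h := cross2_weight_form_eq (rho - gam) (rho' - gam') (lam - gam) (lam' - gam') (gam' - gam)
    rw [← hl0, ← hl1, ← hr0, ← hr1, ← hc0, ← hc2, hPR, mul_comm l1, sub_self, mul_zero] at h
    linear_combination h - 2 * l0 * l1 * hc1
  field_simp
  linear_combination hform

/-- For two adjacent strictly convex bilinearly parametrised quadrilateral elements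
satisfying the "Projections Relation" `l₀r₁ = r₀l₁`, the coefficients of the weight
function `c` satisfy `c₀ − 2κc₁ + κ²c₂ = 0` with `κ = l₀/l₁`. -/
theorem stmt14 (lam lam' gam gam' rho rho' : ℝ × ℝ)
    (hconvL1 : 0 < cross2 (gam - lam) (gam' - gam))
    (hconvL2 : 0 < cross2 (gam' - gam) (lam' - gam'))
    (hconvL3 : 0 < cross2 (lam' - gam') (lam - lam'))
    (hconvL4 : 0 < cross2 (lam - lam') (gam - lam))
    (hconvR1 : 0 < cross2 (rho - gam) (rho' - rho))
    (hconvR2 : 0 < cross2 (rho' - rho) (gam' - rho'))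
    (hconvR3 : 0 < cross2 (gam' - rho') (gam - gam'))
    (hconvR4 : 0 < cross2 (gam - gam') (rho - gam))
    (l0 l1 r0 r1 c0 c1 c2 : ℝ)
    (hl0 : l0 = cross2 (rho - gam) (gam' - gam))
    (hl1 : l1 = cross2 (gam - gam') (rho' - gam'))
    (hr0 : r0 = -cross2 (gam' - gam) (lam - gam))
    (hr1 : r1 = -cross2 (lam' - gam') (gam - gam'))
    (hc0 : c0 = cross2 (rho - gam) (lam - gam))
    (hc1 : c1 = (1/2) * (cross2 (rho - gam) (lam' - gam') - cross2 (lam - gam) (rho' - gam')))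
    (hc2 : c2 = -cross2 (lam' - gam') (rho' - gam'))
    (hPR : l0 * r1 = r0 * l1) :
    c0 - 2 * (l0 / l1) * c1 + (l0 / l1) ^ 2 * c2 = 0 :=
  stmt14_general lam lam' gam gam' rho rho' hconvR3 l0 l1 r0 r1 c0 c1 c2 hl0 hl1 hr0 hr1 hc0 hc1 hc2
    hPR
end

section
/- Let λ̃₀, λ̃₁, λ̃₂, ρ̃₀, ρ̃₁, ρ̃₂ ∈ ℝ² and let d̃ ∈ ℝ² be nonzero. Consider the plane polynomial curves λ̃(v) = ∑_{i=0}^{2} λ̃_i B²_i(v) and ρ̃(v) = ∑_{i=0}^{2} ρ̃_i B²_i(v), and the real polynomials l(v) = ⟨ρ̃(v), d̃⟩, r(v) = −⟨λ̃(v), d̃⟩ and c(v) = ⟨λ̃(v), ρ̃(v)⟩ (these are the conventional weight functions for an edge with one boundary vertex under the bicubic in-plane parametrisation). Then the actual polynomial degrees satisfy deg c ≤ max(deg l, deg r) + 2. In particular, if deg l ≤ 1 and deg r ≤ 1 then deg c ≤ 3, and if deg l = deg r = 0 then deg c ≤ 2. -/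
/-!
The identity `|d|² ⟨λ, ρ⟩ = ⟨λ, d⟩ (d · ρ) - ⟨ρ, d⟩ (d · λ)` writes
`|d|² c = -(d · λ) l - (d · ρ) r`. The dot products `d · λ` and `d · ρ` are again quadratic
Bernstein combinations, so their degree is at most 2, and `|d|² ≠ 0` because `d ≠ 0`.
-/

open Polynomial

noncomputable def bernP (n i : ℕ) : Polynomial ℝ :=
  Polynomial.C (n.choose i : ℝ) * X ^ i * (1 - X) ^ (n - i)

lemma natDegree_bernP_le (n i : ℕ) : (bernP n i).natDegree ≤ n := by
  unfold bernP
  rcases le_or_gt i n with hi | hi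
  · calc _ ≤ i + (n - i) := by compute_degree
      _ = n := by omega
  · simp [Nat.choose_eq_zero_of_lt hi]

lemma natDegree_sum_C_mul_bernP_le (s : Finset ℕ) (n : ℕ) (f : ℕ → ℝ) :
    (∑ i ∈ s, C (f i) * bernP n i).natDegree ≤ n :=
  natDegree_sum_le_of_forall_le _ _ fun i _ =>
    (natDegree_C_mul_le _ _).trans (natDegree_bernP_le n i)

lemma natDegree_le_of_C_mul_eq_mul_add_mul {R : Type*} [Semiring R] [NoZeroDivisors R]
    {a : R} (ha : a ≠ 0) {c l r p q : R[X]} {k : ℕ} (hc : C a * c = p * l + q * r)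
    (hp : p.natDegree ≤ k) (hq : q.natDegree ≤ k) :
    c.natDegree ≤ max l.natDegree r.natDegree + k := by
  rw [← natDegree_C_mul ha, hc]
  refine natDegree_add_le_of_degree_le ?_ ?_
  · calc (p * l).natDegree ≤ k + l.natDegree := natDegree_mul_le_of_le hp le_rfl
      _ ≤ max l.natDegree r.natDegree + k := by omega
  · calc (q * r).natDegree ≤ k + r.natDegree := natDegree_mul_le_of_le hq le_rfl
      _ ≤ max l.natDegree r.natDegree + k := by omega

lemma Prod.fst_sq_add_snd_sq_ne_zero {d : ℝ × ℝ} (hd : d ≠ 0) : d.1 ^ 2 + d.2 ^ 2 ≠ 0 := by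
  contrapose! hd
  ext <;> simp only [Prod.fst_zero, Prod.snd_zero] <;> nlinarith [sq_nonneg d.1, sq_nonneg d.2]

/-- For the conventional weight functions of an edge with one boundary vertex
(bicubic in-plane parametrisation), `deg c ≤ max (deg l) (deg r) + 2`;
in particular `deg l, deg r ≤ 1` gives `deg c ≤ 3`, and `deg l = deg r = 0`
gives `deg c ≤ 2`. -/
theorem stmt15 (lam rho : ℕ → ℝ × ℝ) (d : ℝ × ℝ) (hd : d ≠ 0)
    (lP rP cP : Polynomial ℝ)
    (hlP : lP = Polynomial.C d.2 * (∑ i ∈ Finset.range 3, Polynomial.C (rho i).1 * bernP 2 i)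
              - Polynomial.C d.1 * (∑ i ∈ Finset.range 3, Polynomial.C (rho i).2 * bernP 2 i))
    (hrP : rP = -(Polynomial.C d.2 * (∑ i ∈ Finset.range 3, Polynomial.C (lam i).1 * bernP 2 i)
              - Polynomial.C d.1 * (∑ i ∈ Finset.range 3, Polynomial.C (lam i).2 * bernP 2 i)))
    (hcP : cP = (∑ i ∈ Finset.range 3, Polynomial.C (lam i).1 * bernP 2 i) *
                  (∑ i ∈ Finset.range 3, Polynomial.C (rho i).2 * bernP 2 i)
              - (∑ i ∈ Finset.range 3, Polynomial.C (lam i).2 * bernP 2 i) *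
                  (∑ i ∈ Finset.range 3, Polynomial.C (rho i).1 * bernP 2 i)) :
    cP.natDegree ≤ max lP.natDegree rP.natDegree + 2 ∧
    (lP.natDegree ≤ 1 → rP.natDegree ≤ 1 → cP.natDegree ≤ 3) ∧
    (lP.natDegree = 0 → rP.natDegree = 0 → cP.natDegree ≤ 2) := by
  have normSq_mul_cP : C (d.1 ^ 2 + d.2 ^ 2) * cP =
      (∑ i ∈ Finset.range 3, C (-(d.1 * (lam i).1 + d.2 * (lam i).2)) * bernP 2 i) * lP +
      (∑ i ∈ Finset.range 3, C (-(d.1 * (rho i).1 + d.2 * (rho i).2)) * bernP 2 i) * rP := by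
    simp only [hlP, hrP, hcP, Finset.sum_range_succ, Finset.sum_range_zero, C_add, C_mul, C_neg,
      C_pow]
    ring
  have hdeg := natDegree_le_of_C_mul_eq_mul_add_mul (Prod.fst_sq_add_snd_sq_ne_zero hd) normSq_mul_cP
    (natDegree_sum_C_mul_bernP_le _ _ _) (natDegree_sum_C_mul_bernP_le _ _ _)
  exact ⟨hdeg, fun _ _ => by omega, fun _ _ => by omega⟩
end

section
/- Let n' ≥ 5 be an integer and let l₀, l₁, l₂, r₀, r₁, r₂ be reals with l₀ ≠ 0, r₀ ≠ 0, l₂ ≠ 0 and r₂ ≠ 0. Set g^{(ij)} = l_i·r_j − l_j·r_i for i,j ∈ {0,1,2}. Then there exists a family of reals α₂,…,α_{n'}, not all zero, satisfying α_s·l₀ + 2α_{s+1}·l₁ + α_{s+2}·l₂ = 0 and α_s·r₀ + 2α_{s+1}·r₁ + α_{s+2}·r₂ = 0 for every s = 2,…,n'−2, if and only if one of the following holds: (CASE 1) g^{(01)}, g^{(12)} and g^{(02)} are all nonzero and (g^{(02)})² = 4·g^{(01)}·g^{(12)}; or (CASE 2) g^{(01)} = g^{(12)} = g^{(02)} = 0.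 Moreover, in CASE 1 every such family satisfies α_{s+1} = κ·α_s for s = 2,…,n'−1, where κ = −2g^{(01)}/g^{(02)} = −g^{(02)}/(2g^{(12)}); and in CASE 2 every such family satisfies α_{s+2} = −ξ·α_s − 2η·α_{s+1} for s = 2,…,n'−2, where ξ = l₀/l₂ = r₀/r₂ and η = l₁/l₂ = r₁/r₂. -/
/-!
Write `A = g⁽⁰¹⁾`, `B = g⁽¹²⁾`, `C = g⁽⁰²⁾`. Eliminating `α_{s+2}`, resp. `α_s`, between the
`l`- and the `r`-equation of window `s` gives `C α_s + 2B α_{s+1} = 0` and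
`2A α_{s+1} + C α_{s+2} = 0`. Hence `(α₃, α₄)` lies in the kernel of `[[C, 2B], [2A, C]]`, of
determinant `C² − 4AB`; and since `l₀, l₂ ≠ 0`, the `l`-equations alone spread two consecutive
zeros over the whole family. So a nontrivial family forces `C² = 4AB`, and also forces `A, B, C`
to vanish together (if `C = 0` but `A ≠ 0` or `B ≠ 0`, the eliminated relations kill `α₃, α₄`).

Conversely, `(B, −C, A) = l × r` is orthogonal to `l` and `r`, which makes `κ = −2A/C` a common
root of `l₀ + 2l₁κ + l₂κ²` and `r₀ + 2r₁κ + r₂κ²` in CASE 1, so `α_s = κ^s` works; in CASE 2,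
`r` is a multiple of `l`, and any nonzero solution of the `l`-recurrence works.
-/

def ThreeTermOn (w0 w1 w2 : ℝ) (α : ℕ → ℝ) (a b : ℕ) : Prop :=
  ∀ s, a ≤ s → s ≤ b → α s * w0 + 2 * α (s + 1) * w1 + α (s + 2) * w2 = 0

section ThreeTerm

variable {w0 w1 w2 : ℝ} {α : ℕ → ℝ} {a b : ℕ}

theorem threeTermOn_and_iff {r0 r1 r2 : ℝ} :
    (∀ s, a ≤ s → s ≤ b →
        α s * w0 + 2 * α (s + 1) * w1 + α (s + 2) * w2 = 0 ∧
        α s * r0 + 2 * α (s + 1) * r1 + α (s + 2) * r2 = 0) ↔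
      ThreeTermOn w0 w1 w2 α a b ∧ ThreeTermOn r0 r1 r2 α a b :=
  ⟨fun h => ⟨fun s h₁ h₂ => (h s h₁ h₂).1, fun s h₁ h₂ => (h s h₁ h₂).2⟩,
    fun h s h₁ h₂ => ⟨h.1 s h₁ h₂, h.2 s h₁ h₂⟩⟩

theorem ThreeTermOn.eq_zero_of_eq_zero_of_eq_zero (h : ThreeTermOn w0 w1 w2 α a b)
    (hw0 : w0 ≠ 0) (hw2 : w2 ≠ 0) (hab : a ≤ b) (h₁ : α (a + 1) = 0) (h₂ : α (a + 2) = 0) :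
    ∀ t, a ≤ t → t ≤ b + 2 → α t = 0 := by
  have pair : ∀ t, a + 1 ≤ t → t ≤ b + 1 → α t = 0 ∧ α (t + 1) = 0 := by
    intro t ht
    induction t, ht using Nat.le_induction with
    | base => exact fun _ => ⟨h₁, h₂⟩
    | succ t ht ih =>
      intro htb
      obtain ⟨hz₀, hz₁⟩ := ih (by omega)
      refine ⟨hz₁, ?_⟩
      simpa [hz₀, hz₁, hw2] using h t (by omega) (by omega)
  intro t hat htb
  rcases (by omega : t = a ∨ (a + 1 ≤ t ∧ t ≤ b + 1) ∨ t = b + 1 + 1) with rfl | ht | rfl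
  · simpa [h₁, h₂, hw0] using h t le_rfl hab
  · exact (pair t ht.1 ht.2).1
  · exact (pair (b + 1) (by omega) le_rfl).2

theorem ThreeTermOn.eq_sub (h : ThreeTermOn w0 w1 w2 α a b) (hw2 : w2 ≠ 0) {s : ℕ}
    (h₁ : a ≤ s) (h₂ : s ≤ b) :
    α (s + 2) = -(w0 / w2) * α s - 2 * (w1 / w2) * α (s + 1) := by
  field_simp
  linear_combination h s h₁ h₂

theorem threeTermOn_pow {κ : ℝ} (hκ : w0 + 2 * w1 * κ + w2 * κ ^ 2 = 0) :
    ThreeTermOn w0 w1 w2 (κ ^ ·) a b :=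
  fun s _ _ => by linear_combination κ ^ s * hκ

theorem exists_threeTermOn (hw2 : w2 ≠ 0) (a b : ℕ) :
    ∃ α : ℕ → ℝ, α a = 1 ∧ ThreeTermOn w0 w1 w2 α a b := by
  let E : LinearRecurrence ℝ := ⟨2, ![-(w0 / w2), -(2 * (w1 / w2))]⟩
  let u := E.mkSol ![1, 0]
  refine ⟨fun s => u (s - a), by simpa [u] using E.mkSol_eq_init ![1, 0] 0, ?_⟩
  intro s has _
  obtain ⟨t, rfl⟩ : ∃ t, s = a + t := ⟨s - a, by omega⟩
  have hrec : u (t + 2) = -(w0 / w2) * u t + -(2 * (w1 / w2)) * u (t + 1) := by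
    simpa [E, Fin.sum_univ_two] using E.is_sol_mkSol ![1, 0] t
  simp only [show a + t - a = t by omega, show a + t + 1 - a = t + 1 by omega,
    show a + t + 2 - a = t + 2 by omega, hrec]
  field_simp
  ring

end ThreeTerm

section Weights

variable {l0 l1 l2 r0 r1 r2 : ℝ} {α : ℕ → ℝ} {a b : ℕ}

theorem ThreeTermOn.eliminate_last (hl : ThreeTermOn l0 l1 l2 α a b)
    (hr : ThreeTermOn r0 r1 r2 α a b) {s : ℕ} (h₁ : a ≤ s) (h₂ : s ≤ b) :
    (l0 * r2 - l2 * r0) * α s + 2 * (l1 * r2 - l2 * r1) * α (s + 1) = 0 := by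
  linear_combination r2 * hl s h₁ h₂ - l2 * hr s h₁ h₂

theorem ThreeTermOn.eliminate_first (hl : ThreeTermOn l0 l1 l2 α a b)
    (hr : ThreeTermOn r0 r1 r2 α a b) {s : ℕ} (h₁ : a ≤ s) (h₂ : s ≤ b) :
    2 * (l0 * r1 - l1 * r0) * α (s + 1) + (l0 * r2 - l2 * r0) * α (s + 2) = 0 := by
  linear_combination l0 * hr s h₁ h₂ - r0 * hl s h₁ h₂

theorem case1_or_case2_of_threeTermOn (hl0 : l0 ≠ 0) (hl2 : l2 ≠ 0) (hab : a + 1 ≤ b)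
    (hα : ∃ s, a ≤ s ∧ s ≤ b + 2 ∧ α s ≠ 0)
    (hl : ThreeTermOn l0 l1 l2 α a b) (hr : ThreeTermOn r0 r1 r2 α a b) :
    (l0 * r1 - l1 * r0 ≠ 0 ∧ l1 * r2 - l2 * r1 ≠ 0 ∧ l0 * r2 - l2 * r0 ≠ 0 ∧
        (l0 * r2 - l2 * r0) ^ 2 = 4 * (l0 * r1 - l1 * r0) * (l1 * r2 - l2 * r1)) ∨
      (l0 * r1 - l1 * r0 = 0 ∧ l1 * r2 - l2 * r1 = 0 ∧ l0 * r2 - l2 * r0 = 0) := by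
  have hzero : α (a + 1) = 0 → α (a + 2) = 0 → False := fun h₁ h₂ => by
    obtain ⟨s, has, hsb, hs⟩ := hα
    exact hs (hl.eq_zero_of_eq_zero_of_eq_zero hl0 hl2 (by omega) h₁ h₂ s has hsb)
  have e₀ := hl.eliminate_last hr le_rfl (by omega)
  have e₁ := hl.eliminate_last hr (s := a + 1) (by omega) hab
  have f₀ := hl.eliminate_first hr le_rfl (by omega)
  have f₁ := hl.eliminate_first hr (s := a + 1) (by omega) hab
  simp only [add_assoc, Nat.reduceAdd] at e₁ f₁
  set A := l0 * r1 - l1 * r0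
  set B := l1 * r2 - l2 * r1
  set C := l0 * r2 - l2 * r0
  by_cases hC : C = 0
  · by_cases hAB : A = 0 ∧ B = 0
    · exact .inr ⟨hAB.1, hAB.2, hC⟩
    rw [hC] at e₀ e₁ f₀ f₁
    exfalso
    rcases not_and_or.mp hAB with hA | hB
    · exact hzero (by simpa [hA] using f₀) (by simpa [hA] using f₁)
    · exact hzero (by simpa [hB] using e₀) (by simpa [hB] using e₁)
  · have hdet₁ : (C ^ 2 - 4 * A * B) * α (a + 1) = 0 := by
      linear_combination C * e₁ - 2 * B * f₀
    have hdet₂ : (C ^ 2 - 4 * A * B) * α (a + 2) = 0 := by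
      linear_combination C * f₀ - 2 * A * e₁
    have hQ : C ^ 2 = 4 * A * B := by
      by_contra hQ
      have hQ' := sub_ne_zero.mpr hQ
      exact hzero ((mul_eq_zero.mp hdet₁).resolve_left hQ')
        ((mul_eq_zero.mp hdet₂).resolve_left hQ')
    have hAB : 4 * A * B ≠ 0 := hQ ▸ pow_ne_zero 2 hC
    exact .inl ⟨right_ne_zero_of_mul (left_ne_zero_of_mul hAB), right_ne_zero_of_mul hAB, hC, hQ⟩

theorem ThreeTermOn.eq_mul_of_case1 (hl : ThreeTermOn l0 l1 l2 α a b)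
    (hr : ThreeTermOn r0 r1 r2 α a b) (hB : l1 * r2 - l2 * r1 ≠ 0) (hC : l0 * r2 - l2 * r0 ≠ 0)
    (hQ : (l0 * r2 - l2 * r0) ^ 2 = 4 * (l0 * r1 - l1 * r0) * (l1 * r2 - l2 * r1))
    (hab : a ≤ b) {s : ℕ} (h₁ : a ≤ s) (h₂ : s ≤ b + 1) :
    α (s + 1) = (-(2 * (l0 * r1 - l1 * r0)) / (l0 * r2 - l2 * r0)) * α s := by
  rw [div_mul_eq_mul_div, eq_div_iff hC]
  rcases h₁.eq_or_lt with rfl | hlt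
  · have e := hl.eliminate_last hr le_rfl hab
    refine mul_left_cancel₀ (mul_ne_zero two_ne_zero hB) ?_
    linear_combination (l0 * r2 - l2 * r0) * e - α a * hQ
  · obtain ⟨u, rfl⟩ : ∃ u, s = u + 1 := ⟨s - 1, by omega⟩
    linear_combination hl.eliminate_first hr (s := u) (by omega) (by omega)

theorem quadratic_root_of_cross {A B C w0 w1 w2 : ℝ} (hC : C ≠ 0) (hQ : C ^ 2 = 4 * A * B)
    (hw : w0 * B - w1 * C + w2 * A = 0) :
    w0 + 2 * w1 * (-(2 * A) / C) + w2 * (-(2 * A) / C) ^ 2 = 0 := by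
  field_simp
  linear_combination w0 * hQ + 4 * A * hw

theorem exists_threeTermOn_of_case1 (hA : l0 * r1 - l1 * r0 ≠ 0) (hC : l0 * r2 - l2 * r0 ≠ 0)
    (hQ : (l0 * r2 - l2 * r0) ^ 2 = 4 * (l0 * r1 - l1 * r0) * (l1 * r2 - l2 * r1)) (a b : ℕ) :
    ∃ α : ℕ → ℝ, α a ≠ 0 ∧ ThreeTermOn l0 l1 l2 α a b ∧ ThreeTermOn r0 r1 r2 α a b := by
  have hκ : -(2 * (l0 * r1 - l1 * r0)) / (l0 * r2 - l2 * r0) ≠ 0 :=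
    div_ne_zero (neg_ne_zero.mpr (mul_ne_zero two_ne_zero hA)) hC
  exact ⟨_, pow_ne_zero a hκ,
    threeTermOn_pow (quadratic_root_of_cross hC hQ (by ring)),
    threeTermOn_pow (quadratic_root_of_cross hC hQ (by ring))⟩

theorem ThreeTermOn.of_proportional (hl : ThreeTermOn l0 l1 l2 α a b) (hl2 : l2 ≠ 0)
    (hB : l1 * r2 - l2 * r1 = 0) (hC : l0 * r2 - l2 * r0 = 0) : ThreeTermOn r0 r1 r2 α a b :=
  fun s h₁ h₂ => mul_left_cancel₀ hl2 <| by
    linear_combination r2 * hl s h₁ h₂ - α s * hC - 2 * α (s + 1) * hB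

end Weights

theorem stmt19_general (n' : ℕ) (hn : 5 ≤ n')
    (l0 l1 l2 r0 r1 r2 : ℝ)
    (hl0 : l0 ≠ 0) (hl2 : l2 ≠ 0) (hr2 : r2 ≠ 0) :
    ((∃ α : ℕ → ℝ,
        (∃ s, 2 ≤ s ∧ s ≤ n' ∧ α s ≠ 0) ∧
        (∀ s, 2 ≤ s → s ≤ n' - 2 →
          α s * l0 + 2 * α (s + 1) * l1 + α (s + 2) * l2 = 0 ∧
          α s * r0 + 2 * α (s + 1) * r1 + α (s + 2) * r2 = 0))
      ↔
      ((l0 * r1 - l1 * r0 ≠ 0 ∧ l1 * r2 - l2 * r1 ≠ 0 ∧ l0 * r2 - l2 * r0 ≠ 0 ∧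
          (l0 * r2 - l2 * r0) ^ 2 = 4 * (l0 * r1 - l1 * r0) * (l1 * r2 - l2 * r1))
        ∨ (l0 * r1 - l1 * r0 = 0 ∧ l1 * r2 - l2 * r1 = 0 ∧ l0 * r2 - l2 * r0 = 0)))
    ∧
    ((l0 * r1 - l1 * r0 ≠ 0 ∧ l1 * r2 - l2 * r1 ≠ 0 ∧ l0 * r2 - l2 * r0 ≠ 0 ∧
        (l0 * r2 - l2 * r0) ^ 2 = 4 * (l0 * r1 - l1 * r0) * (l1 * r2 - l2 * r1)) →
      (-(2 * (l0 * r1 - l1 * r0)) / (l0 * r2 - l2 * r0)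
          = -(l0 * r2 - l2 * r0) / (2 * (l1 * r2 - l2 * r1))) ∧
      ∀ α : ℕ → ℝ,
        (∃ s, 2 ≤ s ∧ s ≤ n' ∧ α s ≠ 0) →
        (∀ s, 2 ≤ s → s ≤ n' - 2 →
          α s * l0 + 2 * α (s + 1) * l1 + α (s + 2) * l2 = 0 ∧
          α s * r0 + 2 * α (s + 1) * r1 + α (s + 2) * r2 = 0) →
        ∀ s, 2 ≤ s → s ≤ n' - 1 →
          α (s + 1) = (-(2 * (l0 * r1 - l1 * r0)) / (l0 * r2 - l2 * r0)) * α s)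
    ∧
    ((l0 * r1 - l1 * r0 = 0 ∧ l1 * r2 - l2 * r1 = 0 ∧ l0 * r2 - l2 * r0 = 0) →
      (l0 / l2 = r0 / r2 ∧ l1 / l2 = r1 / r2) ∧
      ∀ α : ℕ → ℝ,
        (∃ s, 2 ≤ s ∧ s ≤ n' ∧ α s ≠ 0) →
        (∀ s, 2 ≤ s → s ≤ n' - 2 →
          α s * l0 + 2 * α (s + 1) * l1 + α (s + 2) * l2 = 0 ∧
          α s * r0 + 2 * α (s + 1) * r1 + α (s + 2) * r2 = 0) →
        ∀ s, 2 ≤ s → s ≤ n' - 2 →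
          α (s + 2) = -(l0 / l2) * α s - 2 * (l1 / l2) * α (s + 1)) := by
  have hn' : n' - 2 + 2 = n' := by omega
  simp only [threeTermOn_and_iff]
  refine ⟨⟨?_, ?_⟩, ?_, ?_⟩
  · rintro ⟨α, hα, hl, hr⟩
    exact case1_or_case2_of_threeTermOn hl0 hl2 (by omega) (hn' ▸ hα) hl hr
  · rintro (⟨hA, -, hC, hQ⟩ | ⟨-, hB, hC⟩)
    · obtain ⟨α, hα, hl, hr⟩ := exists_threeTermOn_of_case1 hA hC hQ 2 (n' - 2)
      exact ⟨α, ⟨2, le_rfl, by omega, hα⟩, hl, hr⟩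
    · obtain ⟨α, hα, hl⟩ := exists_threeTermOn (w0 := l0) (w1 := l1) hl2 2 (n' - 2)
      exact ⟨α, ⟨2, le_rfl, by omega, by simp [hα]⟩, hl, hl.of_proportional hl2 hB hC⟩
  · rintro ⟨-, hB, hC, hQ⟩
    refine ⟨?_, fun α _ ⟨hl, hr⟩ s h₁ h₂ => hl.eq_mul_of_case1 hr hB hC hQ (by omega) h₁ (by omega)⟩
    rw [div_eq_div_iff hC (mul_ne_zero two_ne_zero hB)]
    linear_combination hQ
  · rintro ⟨-, hB, hC⟩
    refine ⟨⟨?_, ?_⟩, fun α _ ⟨hl, _⟩ s h₁ h₂ => hl.eq_sub hl2 h₁ h₂⟩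
    · rw [div_eq_div_iff hl2 hr2]
      linear_combination hC
    · rw [div_eq_div_iff hl2 hr2]
      linear_combination hB

/-- Characterization of the existence of a nontrivial vanishing linear combination of the
rows of the "Restricted Middle" system (bicubic case), together with the explicit
recursions the coefficients of any such family satisfy, in terms of
`g^(ij) = l_i r_j − l_j r_i`. -/
theorem stmt19 (n' : ℕ) (hn : 5 ≤ n')
    (l0 l1 l2 r0 r1 r2 : ℝ)
    (hl0 : l0 ≠ 0) (hr0 : r0 ≠ 0) (hl2 : l2 ≠ 0) (hr2 : r2 ≠ 0) :
    ((∃ α : ℕ → ℝ,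
        (∃ s, 2 ≤ s ∧ s ≤ n' ∧ α s ≠ 0) ∧
        (∀ s, 2 ≤ s → s ≤ n' - 2 →
          α s * l0 + 2 * α (s + 1) * l1 + α (s + 2) * l2 = 0 ∧
          α s * r0 + 2 * α (s + 1) * r1 + α (s + 2) * r2 = 0))
      ↔
      ((l0 * r1 - l1 * r0 ≠ 0 ∧ l1 * r2 - l2 * r1 ≠ 0 ∧ l0 * r2 - l2 * r0 ≠ 0 ∧
          (l0 * r2 - l2 * r0) ^ 2 = 4 * (l0 * r1 - l1 * r0) * (l1 * r2 - l2 * r1))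
        ∨ (l0 * r1 - l1 * r0 = 0 ∧ l1 * r2 - l2 * r1 = 0 ∧ l0 * r2 - l2 * r0 = 0)))
    ∧
    ((l0 * r1 - l1 * r0 ≠ 0 ∧ l1 * r2 - l2 * r1 ≠ 0 ∧ l0 * r2 - l2 * r0 ≠ 0 ∧
        (l0 * r2 - l2 * r0) ^ 2 = 4 * (l0 * r1 - l1 * r0) * (l1 * r2 - l2 * r1)) →
      (-(2 * (l0 * r1 - l1 * r0)) / (l0 * r2 - l2 * r0)
          = -(l0 * r2 - l2 * r0) / (2 * (l1 * r2 - l2 * r1))) ∧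
      ∀ α : ℕ → ℝ,
        (∃ s, 2 ≤ s ∧ s ≤ n' ∧ α s ≠ 0) →
        (∀ s, 2 ≤ s → s ≤ n' - 2 →
          α s * l0 + 2 * α (s + 1) * l1 + α (s + 2) * l2 = 0 ∧
          α s * r0 + 2 * α (s + 1) * r1 + α (s + 2) * r2 = 0) →
        ∀ s, 2 ≤ s → s ≤ n' - 1 →
          α (s + 1) = (-(2 * (l0 * r1 - l1 * r0)) / (l0 * r2 - l2 * r0)) * α s)
    ∧
    ((l0 * r1 - l1 * r0 = 0 ∧ l1 * r2 - l2 * r1 = 0 ∧ l0 * r2 - l2 * r0 = 0) →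
      (l0 / l2 = r0 / r2 ∧ l1 / l2 = r1 / r2) ∧
      ∀ α : ℕ → ℝ,
        (∃ s, 2 ≤ s ∧ s ≤ n' ∧ α s ≠ 0) →
        (∀ s, 2 ≤ s → s ≤ n' - 2 →
          α s * l0 + 2 * α (s + 1) * l1 + α (s + 2) * l2 = 0 ∧
          α s * r0 + 2 * α (s + 1) * r1 + α (s + 2) * r2 = 0) →
        ∀ s, 2 ≤ s → s ≤ n' - 2 →
          α (s + 2) = -(l0 / l2) * α s - 2 * (l1 / l2) * α (s + 1)) :=
  stmt19_general n' hn l0 l1 l2 r0 r1 r2 hl0 hl2 hr2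
end
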